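/- arXiv:1008.0176 — 14 statements merged into one kernel-verified Lean document; each statement's English description precedes it below -/
import Mathlib

section
/- Let G be a finite Abelian group and let L = {(x,y,z) ∈ G³ : x + y = z} be its Cayley table. Suppose θ : G × G → ℤ is a function and R, C, S ⊆ G are sets such that for every z ∉ S, the sum of θ(x,y) over all (x,y) with x + y = z equals k, and for z ∈ S this sum is 0; similarly every row x ∉ R sums to k and rows in R sum to 0, and every column y ∉ C sums to k and columns in C sum to 0. Let r, c, s denote the sums of the elements of R, C, S in G respectively. Then k·(s − r − c) equals the sum of all elements of G if k is odd and G has a unique involution, and equals 0 otherwise. -/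
/-- An involution in an additive group: a nonzero element of order two. -/
def IsInvolution {G : Type*} [AddCommGroup G] (u : G) : Prop := u ≠ 0 ∧ u + u = 0

section Helpers


open Finset

variable {G : Type*} [AddCommGroup G] [Fintype G] [DecidableEq G]

lemma sum_univ_self_add : (∑ g : G, g) + (∑ g : G, g) = 0 := by
  have h : (∑ g : G, g) = ∑ g : G, -g :=
    Fintype.sum_equiv (Equiv.neg G) _ _ (fun g => (neg_neg g).symm)
  nth_rewrite 2 [h]
  rw [← Finset.sum_add_distrib]
  simp

lemma pair_sum (u : G) (hu : u ≠ 0) (hu2 : u + u = 0) :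
    ∀ (S : Finset G), (∀ x ∈ S, x + x = 0) → (∀ x ∈ S, x + u ∈ S) →
      ∃ n : ℕ, S.card = 2 * n ∧ S.sum id = n • u := by
  intro S
  induction S using Finset.strongInduction with
  | _ S ih =>
    intro hS hclose
    rcases S.eq_empty_or_nonempty with rfl | ⟨a, ha⟩
    · exact ⟨0, by simp⟩
    · have hau : a + u ∈ S := hclose a ha
      have hne : a + u ≠ a := by
        intro h; exact hu (by simpa using h)
      set S' := (S.erase a).erase (a + u) with hS'
      have hsub : S' ⊂ S := by
        refine Finset.ssubset_of_subset_of_ssubset ?_ (Finset.erase_ssubset ha)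
        exact Finset.erase_subset _ _
      have hmem : ∀ x, x ∈ S' ↔ x ∈ S ∧ x ≠ a ∧ x ≠ a + u := by
        intro x
        simp only [hS', Finset.mem_erase]
        tauto
      have hS'tor : ∀ x ∈ S', x + x = 0 := fun x hx => hS x ((hmem x).1 hx).1
      have hS'close : ∀ x ∈ S', x + u ∈ S' := by
        intro x hx
        obtain ⟨hxS, hxa, hxau⟩ := (hmem x).1 hx
        refine (hmem _).2 ⟨hclose x hxS, ?_, ?_⟩
        · intro h
          apply hxau
          have h2 := congrArg (· + u) h
          simpa [add_assoc, hu2] using h2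
        · intro h
          exact hxa (add_right_cancel h)
      obtain ⟨n, hcard, hsum⟩ := ih S' hsub hS'tor hS'close
      have hau' : a + u ∈ S.erase a := Finset.mem_erase.2 ⟨hne, hau⟩
      refine ⟨n + 1, ?_, ?_⟩
      · have h1 : S.card = (S.erase a).card + 1 := by
          rw [Finset.card_erase_of_mem ha]
          have := Finset.card_pos.mpr ⟨a, ha⟩
          omega
        have h2 : (S.erase a).card = S'.card + 1 := by
          rw [hS', Finset.card_erase_of_mem hau']
          have := Finset.card_pos.mpr ⟨a + u, hau'⟩
          omega
        omega
      · have e1 : S.sum id = a + (S.erase a).sum id := (Finset.add_sum_erase _ _ ha).symm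
        have e2 : (S.erase a).sum id = (a + u) + S'.sum id := by
          rw [hS']; exact (Finset.add_sum_erase _ _ hau').symm
        rw [e1, e2, hsum]
        have h3 : a + (a + u) = u := by
          rw [← add_assoc, hS a ha, zero_add]
        rw [← add_assoc, h3, succ_nsmul]
        abel

lemma sum_univ_eq_sum_torsion :
    (∑ g : G, g) = ∑ x ∈ univ.filter (fun x : G => x + x = 0), x := by
  rw [← Finset.sum_filter_add_sum_filter_not univ (fun x : G => x + x = 0) (fun x => x)]
  have h0 : ∑ x ∈ univ.filter (fun x : G => ¬(x + x = 0)), x = 0 := by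
    apply Finset.sum_involution (g := fun a _ => -a)
    · intro a _; exact add_neg_cancel a
    · intro a ha _
      simp only [Finset.mem_filter, Finset.mem_univ, true_and] at ha
      intro h
      apply ha
      nth_rewrite 2 [← h]
      exact add_neg_cancel a
    · intro a _; exact neg_neg a
    · intro a ha
      simp only [Finset.mem_filter, Finset.mem_univ, true_and] at ha ⊢
      intro h
      apply ha
      have := congrArg Neg.neg h
      simpa using this
  rw [h0, add_zero]

lemma torsion_closed (u : G) (hu2 : u + u = 0) (x : G) (hx : x + x = 0) :
    (x + u) + (x + u) = 0 := by
  have : (x + u) + (x + u) = (x + x) + (u + u) := by abel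
  rw [this, hx, hu2, add_zero]

lemma sum_univ_of_unique (u : G) (hu : u ≠ 0) (hu2 : u + u = 0)
    (huniq : ∀ v : G, v ≠ 0 → v + v = 0 → v = u) : (∑ g : G, g) = u := by
  rw [sum_univ_eq_sum_torsion]
  have hT : univ.filter (fun x : G => x + x = 0) = {0, u} := by
    ext x
    simp only [Finset.mem_filter, Finset.mem_univ, true_and, Finset.mem_insert,
      Finset.mem_singleton]
    constructor
    · intro hx
      by_cases h : x = 0
      · exact Or.inl h
      · exact Or.inr (huniq x h hx)
    · rintro (rfl | rfl) <;> simp [hu2]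
  rw [hT]
  rw [Finset.sum_insert (by simp [hu.symm]), Finset.sum_singleton, zero_add]

lemma sum_univ_of_two (u v : G) (hu : u ≠ 0) (hu2 : u + u = 0)
    (hv : v ≠ 0) (hv2 : v + v = 0) (huv : u ≠ v) : (∑ g : G, g) = 0 := by
  rw [sum_univ_eq_sum_torsion]
  set T := univ.filter (fun x : G => x + x = 0) with hT
  have htor : ∀ x ∈ T, x + x = 0 := by intro x hx; simpa [hT] using hx
  have hcu : ∀ x ∈ T, x + u ∈ T := by
    intro x hx; simp only [hT, Finset.mem_filter, Finset.mem_univ, true_and] at hx ⊢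
    exact torsion_closed u hu2 x hx
  have hcv : ∀ x ∈ T, x + v ∈ T := by
    intro x hx; simp only [hT, Finset.mem_filter, Finset.mem_univ, true_and] at hx ⊢
    exact torsion_closed v hv2 x hx
  obtain ⟨n, hn, hnsum⟩ := pair_sum u hu hu2 T htor hcu
  obtain ⟨m, hm, hmsum⟩ := pair_sum v hv hv2 T htor hcv
  have hnm : n = m := by omega
  subst hnm
  set w := u + v with hw
  have hw2 : w + w = 0 := torsion_closed v hv2 u hu2
  have hwne : w ≠ 0 := by
    intro h
    apply huv
    have : u = -v := by rwa [hw, add_eq_zero_iff_eq_neg] at h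
    rw [this, neg_eq_iff_add_eq_zero.mpr hv2]
  have hnw : n • w = 0 := by
    have : n • w = n • u + n • v := by rw [hw, smul_add]
    rw [this, hmsum.symm, ← hnsum, hmsum, ← smul_add, hv2, smul_zero]
  have hsum_eq : (∑ x ∈ T, x) = T.sum id := rfl
  rcases Nat.even_or_odd n with ⟨m', hm'⟩ | ⟨m', hm'⟩
  · rw [hsum_eq, hnsum, hm', add_nsmul, ← smul_add, hu2, smul_zero]
  · exfalso
    apply hwne
    have hnww : n • w = w := by
      rw [hm', add_nsmul, one_nsmul, two_mul, add_nsmul, ← smul_add, hw2, smul_zero, zero_add]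
    rwa [hnww] at hnw

lemma sum_univ_of_none (hnone : ∀ v : G, v ≠ 0 → v + v ≠ 0) : (∑ g : G, g) = 0 := by
  rw [sum_univ_eq_sum_torsion]
  have hT : univ.filter (fun x : G => x + x = 0) = {0} := by
    ext x
    simp only [Finset.mem_filter, Finset.mem_univ, true_and, Finset.mem_singleton]
    constructor
    · intro hx
      by_contra h
      exact hnone x h hx
    · rintro rfl; simp
  rw [hT, Finset.sum_singleton]

lemma sum_ite_smul (k : ℤ) (S : Finset G) :
    ∑ z : G, (if z ∈ S then (0:ℤ) else k) • z = k • ((∑ g : G, g) - S.sum id) := by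
  have h1 : ∀ z : G, (if z ∈ S then (0:ℤ) else k) • z
      = k • z - (if z ∈ S then k • z else 0) := by
    intro z; by_cases h : z ∈ S <;> simp [h]
  simp_rw [h1]
  rw [Finset.sum_sub_distrib, Finset.sum_ite_mem, Finset.univ_inter, smul_sub, Finset.smul_sum]
  rw [Finset.smul_sum]
  simp [id]

lemma key_identity {G : Type*} [AddCommGroup G] [Fintype G] [DecidableEq G]
    (k : ℤ) (θ : G × G → ℤ) (R C S : Finset G)
    (hrow : ∀ x : G, ∑ y : G, θ (x, y) = if x ∈ R then 0 else k)
    (hcol : ∀ y : G, ∑ x : G, θ (x, y) = if y ∈ C then 0 else k)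
    (hsym : ∀ z : G, ∑ x : G, θ (x, z - x) = if z ∈ S then 0 else k) :
    k • (S.sum id - R.sum id - C.sum id) = k • (∑ g : G, g) := by
  set Sg := ∑ g : G, g with hSg
  have hA : ∑ x : G, ∑ y : G, θ (x, y) • (x + y) = k • (Sg - S.sum id) := by
    have step1 : ∀ x : G, ∑ y : G, θ (x, y) • (x + y) = ∑ z : G, θ (x, z - x) • z := by
      intro x
      apply Fintype.sum_equiv (Equiv.addLeft x)
      intro y
      simp [add_sub_cancel_left]
    simp_rw [step1]
    rw [Finset.sum_comm]
    have : ∀ z : G, ∑ x : G, θ (x, z - x) • z = (if z ∈ S then (0:ℤ) else k) • z := by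
      intro z; rw [← Finset.sum_smul, hsym]
    simp_rw [this]
    exact sum_ite_smul k S
  have hB : ∑ x : G, ∑ y : G, θ (x, y) • x = k • (Sg - R.sum id) := by
    have : ∀ x : G, ∑ y : G, θ (x, y) • x = (if x ∈ R then (0:ℤ) else k) • x := by
      intro x; rw [← Finset.sum_smul, hrow]
    simp_rw [this]
    exact sum_ite_smul k R
  have hC : ∑ x : G, ∑ y : G, θ (x, y) • y = k • (Sg - C.sum id) := by
    rw [Finset.sum_comm]
    have : ∀ y : G, ∑ x : G, θ (x, y) • y = (if y ∈ C then (0:ℤ) else k) • y := by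
      intro y; rw [← Finset.sum_smul, hcol]
    simp_rw [this]
    exact sum_ite_smul k C
  have hsplit : ∑ x : G, ∑ y : G, θ (x, y) • (x + y)
      = (∑ x : G, ∑ y : G, θ (x, y) • x) + ∑ x : G, ∑ y : G, θ (x, y) • y := by
    rw [← Finset.sum_add_distrib]
    apply Finset.sum_congr rfl
    intro x _
    rw [← Finset.sum_add_distrib]
    apply Finset.sum_congr rfl
    intro y _
    rw [smul_add]
  rw [hA, hB, hC] at hsplit
  have h2 : k • Sg + k • Sg = 0 := by
    rw [← smul_add, sum_univ_self_add, smul_zero]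
  have h4 : k • (S.sum id - R.sum id - C.sum id) + k • Sg
      = -(k • (Sg - S.sum id) - (k • (Sg - R.sum id) + k • (Sg - C.sum id))) := by
    rw [smul_sub, smul_sub, smul_sub, smul_sub, smul_sub]
    abel
  rw [sub_eq_zero.mpr hsplit, neg_zero] at h4
  have h5 := eq_neg_of_add_eq_zero_left h4
  rw [h5, neg_eq_iff_add_eq_zero.mpr h2]

end Helpers

open Classical in
theorem partial_weight_sum_lemma {G : Type*} [AddCommGroup G] [Fintype G] [DecidableEq G]
    (k : ℤ) (θ : G × G → ℤ) (R C S : Finset G)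
    (hrow : ∀ x : G, ∑ y : G, θ (x, y) = if x ∈ R then 0 else k)
    (hcol : ∀ y : G, ∑ x : G, θ (x, y) = if y ∈ C then 0 else k)
    (hsym : ∀ z : G, ∑ x : G, θ (x, z - x) = if z ∈ S then 0 else k) :
    k • (S.sum id - R.sum id - C.sum id) =
      if Odd k ∧ (∃! u : G, IsInvolution u) then ∑ g : G, g else 0 := by
  rw [key_identity k θ R C S hrow hcol hsym]
  by_cases hk : Odd k
  · by_cases hE : ∃! u : G, IsInvolution u
    · rw [if_pos ⟨hk, hE⟩]
      obtain ⟨u, hu, huniq⟩ := hE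
      have hSu : (∑ g : G, g) = u :=
        sum_univ_of_unique u hu.1 hu.2 (fun v h1 h2 => huniq v ⟨h1, h2⟩)
      rw [hSu]
      obtain ⟨m, hm⟩ := hk
      rw [hm, add_zsmul, one_zsmul, two_mul, add_zsmul, ← smul_add, hu.2, smul_zero, zero_add]
    · rw [if_neg (by tauto)]
      have hS0 : (∑ g : G, g) = 0 := by
        by_cases hex : ∃ v : G, IsInvolution v
        · obtain ⟨v, hv⟩ := hex
          have hw : ∃ w : G, IsInvolution w ∧ w ≠ v := by
            by_contra hcon
            push_neg at hcon
            exact hE ⟨v, hv, hcon⟩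
          obtain ⟨w, hwi, hwv⟩ := hw
          exact sum_univ_of_two w v hwi.1 hwi.2 hv.1 hv.2 hwv
        · apply sum_univ_of_none
          intro v h1 h2
          exact hex ⟨v, h1, h2⟩
      rw [hS0, smul_zero]
  · rw [if_neg (by tauto)]
    rw [Int.not_odd_iff_even] at hk
    obtain ⟨m, hm⟩ := hk
    rw [hm, add_zsmul, ← smul_add, sum_univ_self_add, smul_zero]
end

section
/- Every latin square of order n ≥ 1 admits a 2-weight, i.e., an integral weight function on its cells whose sum over every row, every column, and every symbol equals 2. -/
/-- A latin square of order `n`: each symbol occurs exactly once in each row and column. -/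
def IsLatinSquare {n : ℕ} (L : Fin n × Fin n → Fin n) : Prop :=
  (∀ x, Function.Injective fun y => L (x, y)) ∧ (∀ y, Function.Injective fun x => L (x, y))

/-- A `k`-weight of a latin square `L`: all row, column, and symbol sums equal `k`. -/
def IsWeight {n : ℕ} (L : Fin n × Fin n → Fin n) (θ : Fin n × Fin n → ℤ) (k : ℤ) : Prop :=
  (∀ x, ∑ y, θ (x, y) = k) ∧ (∀ y, ∑ x, θ (x, y) = k) ∧
  (∀ z, ∑ p : Fin n × Fin n, (if L p = z then θ p else 0) = k)

theorem exists_two_weight {n : ℕ} (hn : 1 ≤ n) (L : Fin n × Fin n → Fin n)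
    (hL : IsLatinSquare L) : ∃ θ : Fin n × Fin n → ℤ, IsWeight L θ 2 := by
  obtain ⟨hr, hc⟩ := hL
  set x0 : Fin n := ⟨0, hn⟩ with hx0
  set z0 : Fin n := L (x0, x0) with hz0
  -- each symbol occurs exactly once in each row
  have hrow : ∀ (x w : Fin n) (c : ℤ), ∑ y, (if L (x, y) = w then c else 0) = c := by
    intro x w c
    have hb : Function.Bijective fun y => L (x, y) :=
      (Fintype.bijective_iff_injective_and_card _).2 ⟨hr x, rfl⟩
    obtain ⟨y0, hy0⟩ := hb.surjective w
    have : ∀ y, (L (x, y) = w) = (y = y0) := by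
      intro y
      simp only [eq_iff_iff]
      constructor
      · intro h; exact hr x (by simpa using h.trans hy0.symm)
      · rintro rfl; exact hy0
    simp only [this]
    simp
  have hcol : ∀ (y w : Fin n) (c : ℤ), ∑ x, (if L (x, y) = w then c else 0) = c := by
    intro y w c
    have hb : Function.Bijective fun x => L (x, y) :=
      (Fintype.bijective_iff_injective_and_card _).2 ⟨hc y, rfl⟩
    obtain ⟨xx, hxx⟩ := hb.surjective w
    have : ∀ x, (L (x, y) = w) = (x = xx) := by
      intro x
      simp only [eq_iff_iff]
      constructor
      · intro h; exact hc y (by simpa using h.trans hxx.symm)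
      · rintro rfl; exact hxx
    simp only [this]
    simp
  refine ⟨fun p => (if p.1 = x0 then 1 else 0) + (if p.2 = x0 then 1 else 0)
      + (if L p = z0 then 1 else 0) - (if p = (x0, x0) then (n : ℤ) else 0), ?_, ?_, ?_⟩
  · intro x
    simp only [Finset.sum_sub_distrib, Finset.sum_add_distrib]
    have h1 : ∑ _y : Fin n, (if x = x0 then (1:ℤ) else 0) = if x = x0 then (n:ℤ) else 0 := by
      rw [Finset.sum_const]; split <;> simp
    have h2 : ∑ y : Fin n, (if y = x0 then (1:ℤ) else 0) = 1 := by simp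
    have h3 := hrow x z0 1
    have h4 : ∑ y : Fin n, (if ((x, y) : Fin n × Fin n) = (x0, x0) then (n:ℤ) else 0)
        = if x = x0 then (n:ℤ) else 0 := by
      simp only [Prod.mk.injEq]
      by_cases hx : x = x0 <;> simp [hx]
    rw [h1, h2, h3, h4]
    ring
  · intro y
    simp only [Finset.sum_sub_distrib, Finset.sum_add_distrib]
    have h1 : ∑ x : Fin n, (if x = x0 then (1:ℤ) else 0) = 1 := by simp
    have h2 : ∑ _x : Fin n, (if y = x0 then (1:ℤ) else 0) = if y = x0 then (n:ℤ) else 0 := by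
      rw [Finset.sum_const]; split <;> simp
    have h3 := hcol y z0 1
    have h4 : ∑ x : Fin n, (if ((x, y) : Fin n × Fin n) = (x0, x0) then (n:ℤ) else 0)
        = if y = x0 then (n:ℤ) else 0 := by
      simp only [Prod.mk.injEq]
      by_cases hy : y = x0 <;> simp [hy]
    rw [h1, h2, h3, h4]
    ring
  · intro w
    have split : ∀ p : Fin n × Fin n,
        (if L p = w then ((if p.1 = x0 then (1:ℤ) else 0) + (if p.2 = x0 then 1 else 0)
          + (if L p = z0 then 1 else 0) - (if p = (x0, x0) then (n : ℤ) else 0)) else 0)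
        = (if L p = w then (if p.1 = x0 then (1:ℤ) else 0) else 0)
          + (if L p = w then (if p.2 = x0 then (1:ℤ) else 0) else 0)
          + (if L p = w then (if L p = z0 then (1:ℤ) else 0) else 0)
          - (if L p = w then (if p = (x0, x0) then (n:ℤ) else 0) else 0) := by
      intro p; split <;> ring
    simp only [split, Finset.sum_sub_distrib, Finset.sum_add_distrib]
    have hA : ∑ p : Fin n × Fin n, (if L p = w then (if p.1 = x0 then (1:ℤ) else 0) else 0) = 1 := by
      rw [Fintype.sum_prod_type]
      have : ∀ x y : Fin n, (if L (x, y) = w then (if x = x0 then (1:ℤ) else 0) else 0)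
          = (if x = x0 then (if L (x, y) = w then (1:ℤ) else 0) else 0) := by
        intro x y; split <;> split <;> simp_all
      simp only [this]
      rw [Finset.sum_eq_single x0]
      · simp [hrow x0 w 1]
      · intro b _ hb; simp [hb]
      · simp
    have hB : ∑ p : Fin n × Fin n, (if L p = w then (if p.2 = x0 then (1:ℤ) else 0) else 0) = 1 := by
      rw [Fintype.sum_prod_type_right]
      have : ∀ x y : Fin n, (if L (x, y) = w then (if y = x0 then (1:ℤ) else 0) else 0)
          = (if y = x0 then (if L (x, y) = w then (1:ℤ) else 0) else 0) := by
        intro x y; split <;> split <;> simp_all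
      simp only [this]
      rw [Finset.sum_eq_single x0]
      · simp [hcol x0 w 1]
      · intro b _ hb; simp [hb]
      · simp
    have hC : ∑ p : Fin n × Fin n, (if L p = w then (if L p = z0 then (1:ℤ) else 0) else 0)
        = if w = z0 then (n:ℤ) else 0 := by
      have : ∀ p : Fin n × Fin n, (if L p = w then (if L p = z0 then (1:ℤ) else 0) else 0)
          = (if w = z0 then (if L p = w then (1:ℤ) else 0) else 0) := by
        intro p
        by_cases h1 : L p = w <;> by_cases h2 : w = z0 <;> simp_all
      simp only [this]
      by_cases h2 : w = z0
      · simp only [h2, if_true]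
        rw [Fintype.sum_prod_type]
        simp only [hrow _ z0 1]
        simp [mul_comm]
      · simp [h2]
    have hD : ∑ p : Fin n × Fin n, (if L p = w then (if p = (x0, x0) then (n:ℤ) else 0) else 0)
        = if w = z0 then (n:ℤ) else 0 := by
      have : ∀ p : Fin n × Fin n, (if L p = w then (if p = (x0, x0) then (n:ℤ) else 0) else 0)
          = (if p = (x0, x0) then (if w = z0 then (n:ℤ) else 0) else 0) := by
        intro p
        by_cases h1 : p = (x0, x0)
        · subst h1
          by_cases h2 : w = z0 <;> simp [← hz0, h2, eq_comm]
        · simp [h1]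
      simp only [this]
      rw [Finset.sum_ite_eq' Finset.univ ((x0, x0) : Fin n × Fin n)
        (fun _ => if w = z0 then (n:ℤ) else 0)]
      simp
    rw [hA, hB, hC, hD]
    ring
end

section
/- Every latin square of odd order admits a 1-weight, i.e., an integral weight function on its cells whose sum over every row, every column, and every symbol equals 1. -/
theorem exists_one_weight_of_odd_order {n : ℕ} (hn : Odd n) (L : Fin n × Fin n → Fin n)
    (hL : IsLatinSquare L) : ∃ θ : Fin n × Fin n → ℤ, IsWeight L θ 1 := by
  obtain ⟨m, hm⟩ := hn
  have hn1 : 0 < n := by omega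
  set x0 : Fin n := ⟨0, hn1⟩ with hx0
  set z0 : Fin n := L (x0, x0) with hz0
  -- helper: sum of an indicator of a bijective function hitting z
  have hbij : ∀ (f : Fin n → Fin n), Function.Bijective f → ∀ (z : Fin n) (c : ℤ),
      ∑ y, (if f y = z then c else 0) = c := by
    intro f hf z c
    rw [Fintype.sum_bijective f hf _ (fun w => if w = z then c else 0) (fun y => rfl)]
    simp
  have hrow : ∀ (x z : Fin n) (c : ℤ), ∑ y, (if L (x, y) = z then c else 0) = c := by
    intro x z c
    exact hbij _ (Finite.injective_iff_bijective.mp (hL.1 x)) z c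
  have hcol : ∀ (y z : Fin n) (c : ℤ), ∑ x, (if L (x, y) = z then c else 0) = c := by
    intro y z c
    exact hbij _ (Finite.injective_iff_bijective.mp (hL.2 y)) z c
  refine ⟨fun p => 1 - m * ((if p.1 = x0 then 1 else 0) + (if p.2 = x0 then 1 else 0)
      + (if L p = z0 then 1 else 0) - n * (if p = (x0, x0) then 1 else 0)), ?_, ?_, ?_⟩
  · intro x
    simp only [Finset.sum_sub_distrib, Finset.sum_add_distrib, ← Finset.mul_sum,
      Finset.sum_const, Finset.card_univ, Fintype.card_fin, nsmul_eq_mul, mul_one,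
      Prod.mk.injEq, ite_and]
    rw [hrow x z0 1]
    by_cases hx : x = x0 <;> simp [hx, Finset.sum_ite_eq'] <;> push_cast [hm] <;> ring
  · intro y
    simp only [Finset.sum_sub_distrib, Finset.sum_add_distrib, ← Finset.mul_sum,
      Finset.sum_const, Finset.card_univ, Fintype.card_fin, nsmul_eq_mul, mul_one,
      Prod.mk.injEq, ite_and]
    rw [hcol y z0 1]
    by_cases hy : y = x0 <;> simp [hy, Finset.sum_ite_eq'] <;> push_cast [hm] <;> ring
  · intro z
    have key : ∀ p : Fin n × Fin n,
        (if L p = z then ((1:ℤ) - (m:ℤ) * ((if p.1 = x0 then (1:ℤ) else 0)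
          + (if p.2 = x0 then (1:ℤ) else 0) + (if L p = z0 then (1:ℤ) else 0)
          - (n:ℤ) * (if p = (x0, x0) then (1:ℤ) else 0))) else (0:ℤ))
        = (if L p = z then (1:ℤ) else 0)
          - (m:ℤ) * ((if L p = z ∧ p.1 = x0 then (1:ℤ) else 0)
            + (if L p = z ∧ p.2 = x0 then (1:ℤ) else 0)
            + (if L p = z ∧ L p = z0 then (1:ℤ) else 0)
            - (n:ℤ) * (if L p = z ∧ p = (x0, x0) then (1:ℤ) else 0)) := by
      intro p
      by_cases h : L p = z <;> simp [h]
    simp only [key, Finset.sum_sub_distrib, Finset.sum_add_distrib, ← Finset.mul_sum]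
    have S1 : ∑ p : Fin n × Fin n, (if L p = z then (1:ℤ) else 0) = n := by
      rw [Fintype.sum_prod_type]
      simp only [hrow _ z (1:ℤ)]
      simp
    have S2 : ∑ p : Fin n × Fin n, (if L p = z ∧ p.1 = x0 then (1:ℤ) else 0) = 1 := by
      rw [Fintype.sum_prod_type]
      have : ∀ x : Fin n, ∑ y, (if L (x, y) = z ∧ x = x0 then (1:ℤ) else 0)
          = if x = x0 then 1 else 0 := by
        intro x
        by_cases hx : x = x0 <;> simp [hx, hrow]
      simp only [this]
      simp [Finset.sum_ite_eq']
    have S3 : ∑ p : Fin n × Fin n, (if L p = z ∧ p.2 = x0 then (1:ℤ) else 0) = 1 := by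
      rw [Fintype.sum_prod_type_right]
      have : ∀ y : Fin n, ∑ x, (if L (x, y) = z ∧ y = x0 then (1:ℤ) else 0)
          = if y = x0 then 1 else 0 := by
        intro y
        by_cases hy : y = x0 <;> simp [hy, hcol]
      simp only [this]
      simp [Finset.sum_ite_eq']
    have S4 : ∑ p : Fin n × Fin n, (if L p = z ∧ L p = z0 then (1:ℤ) else 0)
        = if z = z0 then (n:ℤ) else 0 := by
      by_cases hz : z = z0
      · subst hz; simp only [and_self]; exact S1
      · have : ∀ p : Fin n × Fin n, (if L p = z ∧ L p = z0 then (1:ℤ) else 0) = 0 := by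
          intro p
          by_cases h : L p = z <;> simp [h, hz]
        simp [this, hz]
    have S5 : ∑ p : Fin n × Fin n, (if L p = z ∧ p = (x0, x0) then (1:ℤ) else 0)
        = if z = z0 then 1 else 0 := by
      have : ∀ p : Fin n × Fin n, (if L p = z ∧ p = (x0, x0) then (1:ℤ) else 0)
          = if p = (x0, x0) then (if z = z0 then (1:ℤ) else 0) else 0 := by
        intro p
        by_cases h : p = (x0, x0)
        · subst h
          rw [← hz0]
          by_cases hzz : z = z0
          · simp [hzz]
          · simp only [if_pos rfl, and_true]
            rw [if_neg (fun h' => hzz h'.symm), if_neg hzz]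
            simp
        · simp [h]
      simp only [this]
      simp [Finset.sum_ite_eq']
    rw [S1, S2, S3, S4, S5]
    by_cases hz : z = z0 <;> simp [hz] <;> push_cast [hm] <;> ring
end

section
/- Fix a latin square L of order n and a cell (r,c) with symbol s = L(r,c). Define θ by: θ(r,c) = 3 − n; θ(x,y) = 1 if (x,y) ≠ (r,c) and exactly one of the conditions x = r, y = c, L(x,y) = s holds; θ(x,y) = 0 otherwise. Then θ is a 2-weight of L. -/
open Classical in
theorem explicit_two_weight {n : ℕ} (L : Fin n × Fin n → Fin n) (hL : IsLatinSquare L)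
    (r c : Fin n) :
    IsWeight L
      (fun p =>
        if p = (r, c) then 3 - (n : ℤ)
        else if ((if p.1 = r then 1 else 0) + (if p.2 = c then 1 else 0) +
            (if L p = L (r, c) then 1 else 0) : ℕ) = 1 then 1
        else 0)
      2 := by
  obtain ⟨hrow, hcol⟩ := hL
  have rowcount : ∀ (x z : Fin n), ∑ y, (if L (x, y) = z then (1:ℤ) else 0) = 1 := by
    intro x z
    have hbij : Function.Bijective fun y => L (x, y) :=
      Finite.injective_iff_bijective.mp (hrow x)
    obtain ⟨y0, hy0⟩ := hbij.surjective z
    have he : ∀ y, (L (x, y) = z) ↔ y = y0 := fun y =>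
      ⟨fun h => hbij.injective (h.trans hy0.symm), fun h => h ▸ hy0⟩
    simp only [he]
    simp
  have colcount : ∀ (y z : Fin n), ∑ x, (if L (x, y) = z then (1:ℤ) else 0) = 1 := by
    intro y z
    have hbij : Function.Bijective fun x => L (x, y) :=
      Finite.injective_iff_bijective.mp (hcol y)
    obtain ⟨x0, hx0⟩ := hbij.surjective z
    have he : ∀ x, (L (x, y) = z) ↔ x = x0 := fun x =>
      ⟨fun h => hbij.injective (h.trans hx0.symm), fun h => h ▸ hx0⟩
    simp only [he]
    simp
  have key : ∀ a b : Fin n,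
      (if (a, b) = (r, c) then 3 - (n : ℤ)
        else if ((if a = r then 1 else 0) + (if b = c then 1 else 0) +
            (if L (a, b) = L (r, c) then 1 else 0) : ℕ) = 1 then 1
        else 0)
      = (if a = r then (1:ℤ) else 0) + (if b = c then 1 else 0) +
        (if L (a, b) = L (r, c) then 1 else 0) - n * (if (a, b) = (r, c) then 1 else 0) := by
    intro a b
    by_cases hp : (a, b) = (r, c)
    · injection hp with h1 h2
      subst h1; subst h2
      norm_num
    · rw [if_neg hp, if_neg hp]
      by_cases h1 : a = r <;> by_cases h2 : b = c <;>
        by_cases h3 : L (a, b) = L (r, c)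
      · exact absurd (by rw [h1, h2]) hp
      · exact absurd (by rw [h1, h2]) hp
      · subst h1; exact absurd (by rw [hrow a h3]) hp
      · simp_all
      · subst h2; exact absurd (by rw [hcol b h3]) hp
      · simp_all
      · simp_all
      · simp_all
  refine ⟨?_, ?_, ?_⟩
  · intro x
    simp only [key]
    rw [Finset.sum_sub_distrib, Finset.sum_add_distrib, Finset.sum_add_distrib]
    have e1 : ∑ _y : Fin n, (if x = r then (1:ℤ) else 0)
        = n * (if x = r then 1 else 0) := by
      simp [Finset.sum_const, mul_comm]
    have e2 : ∑ y : Fin n, (if y = c then (1:ℤ) else 0) = 1 := by simp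
    have e3 := rowcount x (L (r, c))
    have e4 : ∑ y : Fin n, ((n:ℤ) * (if (x, y) = (r, c) then 1 else 0))
        = n * (if x = r then 1 else 0) := by
      rw [← Finset.mul_sum]
      congr 1
      by_cases hx : x = r
      · subst hx; simp [Prod.ext_iff]
      · simp [Prod.ext_iff, hx]
    rw [e1, e2, e3, e4]; ring
  · intro y
    simp only [key]
    rw [Finset.sum_sub_distrib, Finset.sum_add_distrib, Finset.sum_add_distrib]
    have e1 : ∑ x : Fin n, (if x = r then (1:ℤ) else 0) = 1 := by simp
    have e2 : ∑ _x : Fin n, (if y = c then (1:ℤ) else 0)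
        = n * (if y = c then 1 else 0) := by
      simp [Finset.sum_const, mul_comm]
    have e3 := colcount y (L (r, c))
    have e4 : ∑ x : Fin n, ((n:ℤ) * (if (x, y) = (r, c) then 1 else 0))
        = n * (if y = c then 1 else 0) := by
      rw [← Finset.mul_sum]
      congr 1
      by_cases hy : y = c
      · subst hy; simp [Prod.ext_iff]
      · simp [Prod.ext_iff, hy]
    rw [e1, e2, e3, e4]; ring
  · intro z
    rw [Fintype.sum_prod_type]
    have key2 : ∀ a b : Fin n,
        (if L (a, b) = z then
          (if (a, b) = (r, c) then 3 - (n : ℤ)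
            else if ((if a = r then 1 else 0) + (if b = c then 1 else 0) +
                (if L (a, b) = L (r, c) then 1 else 0) : ℕ) = 1 then 1
            else 0)
          else 0)
        = (if L (a, b) = z ∧ a = r then (1:ℤ) else 0)
          + (if L (a, b) = z ∧ b = c then 1 else 0)
          + (if L (a, b) = z ∧ L (a, b) = L (r, c) then 1 else 0)
          - n * (if L (a, b) = z ∧ (a, b) = (r, c) then 1 else 0) := by
      intro a b
      by_cases h : L (a, b) = z
      · rw [if_pos h, key a b]
        simp [h]
      · simp [h]
    simp only [key2]
    rw [Finset.sum_congr rfl (fun a _ => by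
      rw [Finset.sum_sub_distrib, Finset.sum_add_distrib, Finset.sum_add_distrib])]
    rw [Finset.sum_sub_distrib, Finset.sum_add_distrib, Finset.sum_add_distrib]
    have S1 : ∑ a : Fin n, ∑ b : Fin n,
        (if L (a, b) = z ∧ a = r then (1:ℤ) else 0) = 1 := by
      have h : ∀ a : Fin n, ∑ b : Fin n, (if L (a, b) = z ∧ a = r then (1:ℤ) else 0)
          = if a = r then 1 else 0 := by
        intro a
        by_cases ha : a = r
        · subst ha; simp [rowcount a z]
        · simp [ha]
      simp [h]
    have S2 : ∑ a : Fin n, ∑ b : Fin n,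
        (if L (a, b) = z ∧ b = c then (1:ℤ) else 0) = 1 := by
      have h : ∀ a : Fin n, ∑ b : Fin n, (if L (a, b) = z ∧ b = c then (1:ℤ) else 0)
          = if L (a, c) = z then 1 else 0 := by
        intro a
        have h' : ∀ b : Fin n, (if L (a, b) = z ∧ b = c then (1:ℤ) else 0)
            = if b = c then (if L (a, b) = z then (1:ℤ) else 0) else 0 := by
          intro b; by_cases hb : b = c <;> simp [hb]
        rw [Finset.sum_congr rfl (fun b _ => h' b), Finset.sum_ite_eq']
        simp
      rw [Finset.sum_congr rfl (fun a _ => h a)]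
      exact colcount c z
    have S3 : ∑ a : Fin n, ∑ b : Fin n,
        (if L (a, b) = z ∧ L (a, b) = L (r, c) then (1:ℤ) else 0)
        = n * (if z = L (r, c) then 1 else 0) := by
      by_cases hz : z = L (r, c)
      · subst hz
        simp only [and_self]
        rw [Finset.sum_congr rfl (fun a _ => rowcount a (L (r, c)))]
        simp [mul_comm]
      · have h : ∀ a b : Fin n, ¬(L (a, b) = z ∧ L (a, b) = L (r, c)) :=
          fun a b ⟨hh1, hh2⟩ => hz (hh1.symm.trans hh2)
        simp [h, hz]
    have S4 : ∑ a : Fin n, ∑ b : Fin n,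
        ((n:ℤ) * (if L (a, b) = z ∧ (a, b) = (r, c) then 1 else 0))
        = n * (if z = L (r, c) then 1 else 0) := by
      simp only [← Finset.mul_sum]
      congr 1
      have h : ∀ a b : Fin n, (L (a, b) = z ∧ (a, b) = (r, c))
          ↔ (a = r ∧ (b = c ∧ z = L (r, c))) := by
        intro a b
        constructor
        · rintro ⟨hh1, hh2⟩
          injection hh2 with ha hb
          subst ha; subst hb
          exact ⟨rfl, rfl, hh1.symm⟩
        · rintro ⟨ha, hb, hz⟩
          subst ha; subst hb
          exact ⟨hz.symm, rfl⟩
      simp only [h, ite_and]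
      simp [Finset.sum_ite_eq']
    rw [S1, S2, S3, S4]
    ring
end

section
/- Let G be a finite Abelian group with a unique involution (unique element of order 2). Then the Cayley table of G admits no k-weight for any odd integer k. -/
/-!
Pair every element with its negative: the elements `g` with `g + g ≠ 0` cancel in `∑ g`, so
a unique involution `u` makes `∑ g = u`. For a `k`-weight `θ`, evaluating
`∑ x y, θ (x, y) • (x + y)` via the row and column sums gives `2k • ∑ g`, and via the symbol sums
gives `k • ∑ g`; hence `k • u = 0`, which is impossible for odd `k` since `u ≠ 0` and `2u = 0`.
-/

/-- A `k`-weight of the Cayley table of an additive group `G`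
(the latin square with symbol `x + y` in cell `(x, y)`):
all row, column, and symbol sums equal `k`. -/
def IsCayleyWeight {G : Type*} [AddCommGroup G] [Fintype G] (θ : G × G → ℤ) (k : ℤ) : Prop :=
  (∀ x : G, ∑ y : G, θ (x, y) = k) ∧ (∀ y : G, ∑ x : G, θ (x, y) = k) ∧
  (∀ z : G, ∑ x : G, θ (x, z - x) = k)

open Finset

section Involutions

variable {G : Type*} [AddCommGroup G] [Fintype G] [DecidableEq G]

theorem sum_filter_add_self_ne_zero :
    ∑ g ∈ univ.filter (fun g : G => g + g ≠ 0), g = 0 := by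
  refine sum_involution (fun a _ => -a) (fun a _ => add_neg_cancel a) (fun a ha _ => ?_)
    (fun a ha => ?_) (fun a _ => neg_neg a)
  · simp only [mem_filter, mem_univ, true_and] at ha
    exact fun h => ha (by nth_rewrite 2 [← h]; exact add_neg_cancel a)
  · simp only [mem_filter, mem_univ, true_and] at ha ⊢
    rwa [← neg_add, neg_ne_zero]

theorem sum_univ_eq_of_unique_involution {u : G} (hu0 : u ≠ 0) (huu : u + u = 0)
    (huniq : ∀ g : G, g ≠ 0 ∧ g + g = 0 → g = u) : ∑ g : G, g = u := by
  have htwoTorsion : univ.filter (fun g : G => g + g = 0) = {0, u} := by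
    ext g
    simp only [mem_filter, mem_univ, true_and, mem_insert, mem_singleton]
    refine ⟨fun hg => or_iff_not_imp_left.2 fun h0 => huniq g ⟨h0, hg⟩, ?_⟩
    rintro (rfl | rfl) <;> simp [huu]
  rw [← sum_filter_add_sum_filter_not univ (fun g : G => g + g = 0), htwoTorsion,
    sum_filter_add_self_ne_zero, add_zero, sum_pair hu0.symm, zero_add]

end Involutions

namespace IsCayleyWeight

variable {G : Type*} [AddCommGroup G] [Fintype G] {θ : G × G → ℤ} {k : ℤ}

theorem sum_smul_add_eq_of_rows_cols (hθ : IsCayleyWeight θ k) :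
    ∑ x : G, ∑ y : G, θ (x, y) • (x + y) = k • ∑ g : G, g + k • ∑ g : G, g := by
  obtain ⟨hrow, hcol, -⟩ := hθ
  simp_rw [smul_add, sum_add_distrib]
  rw [sum_comm (f := fun x y => θ (x, y) • y)]
  simp_rw [← sum_smul, hrow, hcol, smul_sum]

theorem sum_smul_add_eq_of_symbols (hθ : IsCayleyWeight θ k) :
    ∑ x : G, ∑ y : G, θ (x, y) • (x + y) = k • ∑ g : G, g := by
  have hshift : ∀ x : G, ∑ y : G, θ (x, y) • (x + y) = ∑ z : G, θ (x, z - x) • z := fun x =>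
    Fintype.sum_equiv (Equiv.addLeft x) _ _ fun y => by simp
  simp_rw [hshift]
  rw [sum_comm]
  simp_rw [← sum_smul, hθ.2.2, smul_sum]

theorem smul_sum_univ_eq_zero (hθ : IsCayleyWeight θ k) : k • ∑ g : G, g = 0 :=
  add_eq_right.mp (hθ.sum_smul_add_eq_of_rows_cols.symm.trans hθ.sum_smul_add_eq_of_symbols)

end IsCayleyWeight

theorem no_odd_weight_of_unique_involution {G : Type*} [AddCommGroup G] [Fintype G]
    (hu : ∃! u : G, u ≠ 0 ∧ u + u = 0) :
    ∀ k : ℤ, Odd k → ¬ ∃ θ : G × G → ℤ, IsCayleyWeight θ k := by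
  classical
  obtain ⟨u, ⟨hu0, huu⟩, huniq⟩ := hu
  rintro k ⟨m, rfl⟩ ⟨θ, hθ⟩
  have hku := hθ.smul_sum_univ_eq_zero
  rw [sum_univ_eq_of_unique_involution hu0 huu huniq, add_smul, mul_comm, mul_smul, two_smul,
    huu, smul_zero, zero_add, one_smul] at hku
  exact hu0 hku
end

section
/- The Cayley table of the cyclic group ℤ/2m (m ≥ 1) admits no transversal; more generally it admits no k-weight for odd k, and in particular no k-plex for any odd k. -/
/-- A `k`-plex of the Cayley table of `G`: a set of cells meeting each row,
column, and symbol exactly `k` times. -/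
def IsCayleyPlex {G : Type*} [AddCommGroup G] [Fintype G] [DecidableEq G]
    (P : Finset (G × G)) (k : ℕ) : Prop :=
  (∀ x : G, (P.filter fun p => p.1 = x).card = k) ∧
  (∀ y : G, (P.filter fun p => p.2 = y).card = k) ∧
  (∀ z : G, (P.filter fun p => p.1 + p.2 = z).card = k)

open Finset

section CayleyWeight

variable {G : Type*} [AddCommGroup G] [Fintype G]

theorem IsCayleyWeight.smul_sum_univ_eq_zero_s8 {θ : G × G → ℤ} {k : ℤ}
    (h : IsCayleyWeight θ k) : k • ∑ x : G, x = 0 := by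
  obtain ⟨hrow, hcol, hsym⟩ := h
  have by_symbols : ∑ x : G, ∑ y : G, θ (x, y) • (x + y) = k • ∑ z : G, z :=
    calc ∑ x : G, ∑ y : G, θ (x, y) • (x + y)
        = ∑ x : G, ∑ z : G, θ (x, z - x) • z := by
          refine Fintype.sum_congr _ _ fun x => Fintype.sum_equiv (Equiv.addLeft x) _ _ ?_
          simp
      _ = k • ∑ z : G, z := by
          rw [sum_comm, smul_sum]
          simp_rw [← sum_smul, hsym]
  have by_lines :
      ∑ x : G, ∑ y : G, θ (x, y) • (x + y) = k • ∑ x : G, x + k • ∑ y : G, y := by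
    simp_rw [smul_add, sum_add_distrib]
    rw [sum_comm (f := fun x y => θ (x, y) • y)]
    simp_rw [← sum_smul, hrow, hcol, smul_sum]
  exact left_eq_add.mp (by_symbols.symm.trans by_lines)

theorem not_isCayleyWeight_of_odd (htwo : 2 • ∑ x : G, x = 0) (hne : ∑ x : G, x ≠ 0)
    {k : ℤ} (hk : Odd k) (θ : G × G → ℤ) : ¬ IsCayleyWeight θ k := by
  intro h
  obtain ⟨j, rfl⟩ := hk
  have hzero := h.smul_sum_univ_eq_zero_s8
  rw [add_smul, mul_smul, smul_comm, two_zsmul, ← two_nsmul, htwo, smul_zero, zero_add,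
    one_smul] at hzero
  exact hne hzero

theorem sum_ite_eq_one_of_bijective {α β : Type*} [Fintype α] [Fintype β] [DecidableEq β]
    {f : α → β} (hf : Function.Bijective f) (z : β) :
    ∑ x, (if f x = z then 1 else 0 : ℤ) = 1 := by
  rw [Fintype.sum_bijective f hf _ (fun w => if w = z then 1 else 0) fun _ => rfl]
  simp

theorem isCayleyWeight_graph_of_bijective_add [DecidableEq G] (σ : Equiv.Perm G)
    (hσ : Function.Bijective fun x => x + σ x) :
    IsCayleyWeight (fun p => if σ p.1 = p.2 then 1 else 0) 1 := by
  refine ⟨fun x => ?_, fun y => sum_ite_eq_one_of_bijective σ.bijective y, fun z => ?_⟩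
  · simp
  · simp_rw [eq_sub_iff_add_eq']
    exact sum_ite_eq_one_of_bijective hσ z

theorem card_filter_eq_sum_ite_of_range_eq {α β γ : Type*} [Fintype γ] [DecidableEq α]
    [DecidableEq β] (P : Finset α) (g : α → β) (z : β) (s : γ ↪ α)
    (hs : ∀ p, g p = z ↔ p ∈ Set.range s) :
    ((P.filter fun p => g p = z).card : ℤ) = ∑ c, if s c ∈ P then 1 else 0 := by
  rw [sum_boole, ← card_map s]
  congr 2
  ext p
  simp only [mem_filter, mem_map, mem_univ, true_and, hs p, Set.mem_range]
  constructor
  · rintro ⟨hp, c, rfl⟩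
    exact ⟨c, hp, rfl⟩
  · rintro ⟨c, hc, rfl⟩
    exact ⟨hc, c, rfl⟩

theorem IsCayleyPlex.isCayleyWeight [DecidableEq G] {P : Finset (G × G)} {k : ℕ}
    (h : IsCayleyPlex P k) : IsCayleyWeight (fun p => if p ∈ P then 1 else 0) k := by
  obtain ⟨hrow, hcol, hsym⟩ := h
  refine ⟨fun x => ?_, fun y => ?_, fun z => ?_⟩
  · rw [← hrow x]
    refine (card_filter_eq_sum_ite_of_range_eq P Prod.fst x
      ⟨_, Prod.mk_right_injective x⟩ fun ⟨a, b⟩ => ?_).symm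
    simp [eq_comm]
  · rw [← hcol y]
    refine (card_filter_eq_sum_ite_of_range_eq P Prod.snd y
      ⟨_, Prod.mk_left_injective y⟩ fun ⟨a, b⟩ => ?_).symm
    simp [eq_comm]
  · rw [← hsym z]
    refine (card_filter_eq_sum_ite_of_range_eq P (fun p => p.1 + p.2) z
      ⟨fun x => (x, z - x), fun a b hab => congrArg Prod.fst hab⟩ fun ⟨a, b⟩ => ?_).symm
    change a + b = z ↔ ∃ x, (x, z - x) = (a, b)
    constructor
    · rintro rfl
      exact ⟨a, by rw [add_sub_cancel_left]⟩
    · rintro ⟨x, hx⟩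
      obtain ⟨rfl, rfl⟩ := Prod.mk.inj hx
      exact add_sub_cancel x z

end CayleyWeight

namespace ZMod

theorem sum_univ_eq_sum_range {M : Type*} [AddCommMonoid M] (n : ℕ) [NeZero n]
    (f : ZMod n → M) : ∑ x : ZMod n, f x = ∑ i ∈ range n, f i := by
  refine sum_nbij' val (fun i => (i : ZMod n)) (fun x _ => mem_range.mpr x.val_lt)
    (fun _ _ => mem_univ _) (fun x _ => natCast_zmod_val x)
    (fun _ hi => val_cast_of_lt (mem_range.mp hi))
    (fun x _ => congrArg f (natCast_zmod_val x).symm)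

theorem sum_univ_two_mul (m : ℕ) [NeZero m] : ∑ x : ZMod (2 * m), x = m := by
  obtain ⟨n, rfl⟩ := Nat.exists_eq_succ_of_ne_zero (NeZero.ne m)
  have gauss : ∑ i ∈ range (2 * (n + 1)), i = 2 * (n + 1) * n + (n + 1) := by
    have h := sum_range_id_mul_two (2 * (n + 1))
    rw [show 2 * (n + 1) - 1 = 2 * n + 1 by omega] at h
    nlinarith
  rw [sum_univ_eq_sum_range, ← Nat.cast_sum, gauss, Nat.cast_add, Nat.cast_mul, natCast_self,
    zero_mul, zero_add]

theorem two_nsmul_natCast_eq_zero (m : ℕ) : 2 • (m : ZMod (2 * m)) = 0 := by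
  rw [two_nsmul, ← two_mul]
  exact_mod_cast natCast_self (2 * m)

theorem natCast_ne_zero_two_mul (m : ℕ) [NeZero m] : (m : ZMod (2 * m)) ≠ 0 := by
  rw [Ne, natCast_eq_zero_iff]
  intro hdvd
  have hm := Nat.pos_of_neZero m
  have := Nat.le_of_dvd hm hdvd
  omega

theorem not_isCayleyWeight_two_mul_of_odd (m : ℕ) [NeZero m] {k : ℤ} (hk : Odd k)
    (θ : ZMod (2 * m) × ZMod (2 * m) → ℤ) : ¬ IsCayleyWeight θ k := by
  refine not_isCayleyWeight_of_odd ?_ ?_ hk θ <;> rw [sum_univ_two_mul]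
  · exact two_nsmul_natCast_eq_zero m
  · exact natCast_ne_zero_two_mul m

end ZMod

theorem zmod_even_no_transversal_no_odd_weight_no_odd_plex_general (m : ℕ)
    [NeZero m] :
    (¬ ∃ σ : Equiv.Perm (ZMod (2 * m)), Function.Bijective fun x => x + σ x) ∧
    (∀ k : ℤ, Odd k → ¬ ∃ θ : ZMod (2 * m) × ZMod (2 * m) → ℤ, IsCayleyWeight θ k) ∧
    (∀ k : ℕ, Odd k → ¬ ∃ P : Finset (ZMod (2 * m) × ZMod (2 * m)), IsCayleyPlex P k) := by
  refine ⟨fun ⟨σ, hσ⟩ => ?_, fun k hk ⟨θ, hθ⟩ => ?_, fun k hk ⟨P, hP⟩ => ?_⟩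
  · exact ZMod.not_isCayleyWeight_two_mul_of_odd m odd_one _
      (isCayleyWeight_graph_of_bijective_add σ hσ)
  · exact ZMod.not_isCayleyWeight_two_mul_of_odd m hk θ hθ
  · exact ZMod.not_isCayleyWeight_two_mul_of_odd m hk.natCast _ hP.isCayleyWeight

theorem zmod_even_no_transversal_no_odd_weight_no_odd_plex (m : ℕ) (hm : 1 ≤ m)
    [NeZero m] :
    (¬ ∃ σ : Equiv.Perm (ZMod (2 * m)), Function.Bijective fun x => x + σ x) ∧
    (∀ k : ℤ, Odd k → ¬ ∃ θ : ZMod (2 * m) × ZMod (2 * m) → ℤ, IsCayleyWeight θ k) ∧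
    (∀ k : ℕ, Odd k → ¬ ∃ P : Finset (ZMod (2 * m) × ZMod (2 * m)), IsCayleyPlex P k) :=
  zmod_even_no_transversal_no_odd_weight_no_odd_plex_general m
end

section
/- Suppose L is a latin square of order n and L' is a latin square of order qn that has the q-block pattern of L: L' is given by an n×n block matrix [A_{i,j}] of q×q latin squares such that blocks A_{i,j} and A_{i',j'} use the same symbol set if and only if L(i,j) = L(i',j'). If L' admits a k-weight θ, then the function ψ on cells of L defined by ψ(i,j) = ∑ of θ over the cells of block A_{i,j} is a (q·k)-weight of L. -/
/-- A latin square on an index set `α`: each symbol occurs exactly once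
in each row and column. -/
def IsLatinSquareOn {α : Type*} (L : α × α → α) : Prop :=
  (∀ x, Function.Injective fun y => L (x, y)) ∧ (∀ y, Function.Injective fun x => L (x, y))

/-- A `k`-weight of a latin square on `α`: all row, column, and symbol sums equal `k`. -/
def IsWeightOn {α : Type*} [Fintype α] [DecidableEq α] (L : α × α → α)
    (θ : α × α → ℤ) (k : ℤ) : Prop :=
  (∀ x, ∑ y, θ (x, y) = k) ∧ (∀ y, ∑ x, θ (x, y) = k) ∧
  (∀ z : α, ∑ p : α × α, (if L p = z then θ p else 0) = k)

/-- `L'` has the `q`-block pattern of `L`, witnessed by a symbol-class map `π`: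
the symbols of `L'` fall into classes of size `q` indexed by the symbols of `L`,
block `A_{i,j}` uses exactly the symbols of class `L (i, j)`
(so blocks `A_{i,j}` and `A_{i',j'}` use the same symbols iff `L (i,j) = L (i',j')`),
and each block is itself a latin square on its symbol class. -/
def HasBlockPattern {n q : ℕ} (L : Fin n × Fin n → Fin n)
    (L' : (Fin n × Fin q) × (Fin n × Fin q) → Fin n × Fin q)
    (π : Fin n × Fin q → Fin n) : Prop :=
  (∀ z : Fin n, (Finset.univ.filter fun s => π s = z).card = q) ∧
  (∀ i a j b, π (L' ((i, a), (j, b))) = L (i, j)) ∧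
  (∀ i j z, π z = L (i, j) → ∀ a, ∃ b, L' ((i, a), (j, b)) = z)

theorem block_pattern_weight {n q : ℕ} (L : Fin n × Fin n → Fin n)
    (L' : (Fin n × Fin q) × (Fin n × Fin q) → Fin n × Fin q)
    (π : Fin n × Fin q → Fin n)
    (hL : IsLatinSquareOn L) (hL' : IsLatinSquareOn L')
    (hpat : HasBlockPattern L L' π)
    (k : ℤ) (θ : (Fin n × Fin q) × (Fin n × Fin q) → ℤ) (hθ : IsWeightOn L' θ k) :
    IsWeightOn L (fun p => ∑ a : Fin q, ∑ b : Fin q, θ ((p.1, a), (p.2, b))) ((q : ℤ) * k) := by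

  obtain ⟨hrow, hcol, hsym⟩ := hθ
  obtain ⟨hcard, hpi, _⟩ := hpat
  refine ⟨fun x => ?_, fun y => ?_, fun z => ?_⟩
  · calc ∑ y : Fin n, ∑ a : Fin q, ∑ b : Fin q, θ ((x, a), (y, b))
        = ∑ a : Fin q, ∑ y : Fin n, ∑ b : Fin q, θ ((x, a), (y, b)) := Finset.sum_comm
      _ = ∑ a : Fin q, ∑ p : Fin n × Fin q, θ ((x, a), p) := by
          refine Finset.sum_congr rfl fun a _ => ?_
          rw [Fintype.sum_prod_type]
      _ = ∑ _a : Fin q, k := by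
          exact Finset.sum_congr rfl fun a _ => hrow (x, a)
      _ = (q : ℤ) * k := by simp [mul_comm]
  · calc ∑ x : Fin n, ∑ a : Fin q, ∑ b : Fin q, θ ((x, a), (y, b))
        = ∑ x : Fin n, ∑ b : Fin q, ∑ a : Fin q, θ ((x, a), (y, b)) := by
          exact Finset.sum_congr rfl fun x _ => Finset.sum_comm
      _ = ∑ b : Fin q, ∑ x : Fin n, ∑ a : Fin q, θ ((x, a), (y, b)) := Finset.sum_comm
      _ = ∑ b : Fin q, ∑ p : Fin n × Fin q, θ (p, (y, b)) := by
          refine Finset.sum_congr rfl fun b _ => ?_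
          rw [Fintype.sum_prod_type]
      _ = ∑ _b : Fin q, k := Finset.sum_congr rfl fun b _ => hcol (y, b)
      _ = (q : ℤ) * k := by simp [mul_comm]
  · have key : ∀ c : (Fin n × Fin q) × (Fin n × Fin q),
        (∑ s : Fin n × Fin q, if π s = z ∧ L' c = s then θ c else 0)
          = (if π (L' c) = z then θ c else 0) := by
      intro c
      have h1 : ∀ s : Fin n × Fin q, (if π s = z ∧ L' c = s then θ c else 0)
          = (if L' c = s then (if π s = z then θ c else 0) else 0) := by
        intro s
        by_cases h : L' c = s <;> simp [h, and_comm]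
      rw [Finset.sum_congr rfl fun s _ => h1 s, Finset.sum_ite_eq]
      simp
    calc ∑ p : Fin n × Fin n,
          (if L p = z then ∑ a : Fin q, ∑ b : Fin q, θ ((p.1, a), (p.2, b)) else 0)
        = ∑ p : Fin n × Fin n, ∑ a : Fin q, ∑ b : Fin q,
            (if L p = z then θ ((p.1, a), (p.2, b)) else 0) := by
          refine Finset.sum_congr rfl fun p _ => ?_
          split <;> simp
      _ = ∑ i : Fin n, ∑ j : Fin n, ∑ a : Fin q, ∑ b : Fin q,
            (if L (i, j) = z then θ ((i, a), (j, b)) else 0) := by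
          rw [Fintype.sum_prod_type]
      _ = ∑ i : Fin n, ∑ a : Fin q, ∑ j : Fin n, ∑ b : Fin q,
            (if L (i, j) = z then θ ((i, a), (j, b)) else 0) := by
          exact Finset.sum_congr rfl fun i _ => Finset.sum_comm
      _ = ∑ c : (Fin n × Fin q) × (Fin n × Fin q),
            (if π (L' c) = z then θ c else 0) := by
          simp only [Fintype.sum_prod_type]
          refine Finset.sum_congr rfl fun i _ => Finset.sum_congr rfl fun a _ =>
            Finset.sum_congr rfl fun j _ => Finset.sum_congr rfl fun b _ => ?_
          rw [hpi i a j b]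
      _ = ∑ c : (Fin n × Fin q) × (Fin n × Fin q), ∑ s : Fin n × Fin q,
            (if π s = z ∧ L' c = s then θ c else 0) := by
          exact (Finset.sum_congr rfl fun c _ => (key c).symm)
      _ = ∑ s : Fin n × Fin q, ∑ c : (Fin n × Fin q) × (Fin n × Fin q),
            (if π s = z ∧ L' c = s then θ c else 0) := Finset.sum_comm
      _ = ∑ s : Fin n × Fin q,
            (if π s = z then ∑ c, (if L' c = s then θ c else 0) else 0) := by
          refine Finset.sum_congr rfl fun s _ => ?_
          split
          · refine Finset.sum_congr rfl fun c _ => ?_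
            simp_all
          · simp_all
      _ = ∑ s : Fin n × Fin q, (if π s = z then k else 0) := by
          refine Finset.sum_congr rfl fun s _ => ?_
          split
          · exact hsym s
          · rfl
      _ = (q : ℤ) * k := by
          rw [Finset.sum_ite, Finset.sum_const_zero, add_zero, Finset.sum_const,
            hcard z]
          simp [mul_comm]
end

section
/- Suppose L is a latin square with no odd-weight and L' has the q-block pattern of L with q odd. Then L' has no odd-weight. -/
theorem no_odd_weight_of_odd_block_pattern {n q : ℕ} (hq : Odd q)
    (L : Fin n × Fin n → Fin n)
    (L' : (Fin n × Fin q) × (Fin n × Fin q) → Fin n × Fin q)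
    (π : Fin n × Fin q → Fin n)
    (hL : IsLatinSquareOn L) (hL' : IsLatinSquareOn L')
    (hpat : HasBlockPattern L L' π)
    (hno : ∀ k : ℤ, Odd k → ¬ ∃ θ, IsWeightOn L θ k) :
    ∀ k : ℤ, Odd k → ¬ ∃ θ', IsWeightOn L' θ' k := by
  rintro k hk ⟨θ', hrow, hcol, hsym⟩
  obtain ⟨hcard, hπ, -⟩ := hpat
  set θ : Fin n × Fin n → ℤ := fun p => ∑ a, ∑ b, θ' ((p.1, a), (p.2, b)) with hθ
  refine hno ((q : ℤ) * k) (((Int.odd_coe_nat q).mpr hq).mul hk) ⟨θ, ?_, ?_, ?_⟩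
  · intro i
    calc ∑ j, ∑ a, ∑ b, θ' ((i, a), (j, b))
        = ∑ a : Fin q, ∑ j, ∑ b, θ' ((i, a), (j, b)) := Finset.sum_comm
      _ = ∑ _a : Fin q, k := Finset.sum_congr rfl fun a _ =>
          (Fintype.sum_prod_type (f := fun y : Fin n × Fin q => θ' ((i, a), y))).symm.trans
            (hrow (i, a))
      _ = (q : ℤ) * k := by simp [mul_comm]
  · intro j
    calc ∑ i, ∑ a, ∑ b, θ' ((i, a), (j, b))
        = ∑ i, ∑ b : Fin q, ∑ a, θ' ((i, a), (j, b)) :=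
          Finset.sum_congr rfl fun i _ => Finset.sum_comm
      _ = ∑ b : Fin q, ∑ i, ∑ a, θ' ((i, a), (j, b)) := Finset.sum_comm
      _ = ∑ _b : Fin q, k := Finset.sum_congr rfl fun b _ =>
          (Fintype.sum_prod_type (f := fun x : Fin n × Fin q => θ' (x, (j, b)))).symm.trans
            (hcol (j, b))
      _ = (q : ℤ) * k := by simp [mul_comm]
  · intro z
    have key : ∑ p : Fin n × Fin n, (if L p = z then θ p else 0)
        = ∑ p' : (Fin n × Fin q) × (Fin n × Fin q),
            (if π (L' p') = z then θ' p' else 0) := by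
      simp only [Fintype.sum_prod_type]
      refine Finset.sum_congr rfl fun i _ => ?_
      calc ∑ j, (if L (i, j) = z then θ (i, j) else 0)
          = ∑ j, ∑ a, ∑ b, (if L (i, j) = z then θ' ((i, a), (j, b)) else 0) := by
            refine Finset.sum_congr rfl fun j _ => ?_
            simp only [hθ]
            split <;> simp
        _ = ∑ a, ∑ j, ∑ b, (if L (i, j) = z then θ' ((i, a), (j, b)) else 0) :=
            Finset.sum_comm
        _ = ∑ a, ∑ j, ∑ b, (if π (L' ((i, a), (j, b))) = z then θ' ((i, a), (j, b)) else 0) := by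
            simp only [hπ]
    rw [key]
    have key2 : ∀ p' : (Fin n × Fin q) × (Fin n × Fin q),
        (if π (L' p') = z then θ' p' else 0)
        = ∑ s : Fin n × Fin q, if L' p' = s then (if π s = z then θ' p' else 0) else 0 := by
      intro p'
      rw [Finset.sum_ite_eq]
      simp
    simp only [key2]
    rw [Finset.sum_comm]
    have key3 : ∀ s : Fin n × Fin q,
        (∑ p' : (Fin n × Fin q) × (Fin n × Fin q),
          if L' p' = s then (if π s = z then θ' p' else 0) else 0)
        = if π s = z then k else 0 := by
      intro s
      by_cases h : π s = z
      · simp only [h, if_true]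
        exact hsym s
      · simp [h]
    simp only [key3]
    rw [← Finset.sum_filter]
    simp [hcard z, mul_comm]
end

section
/- Any latin square with the odd-block pattern of the Cayley table of ℤ/2m (i.e., of q-step type with q odd and 2m blocks per side) admits no k-plex for any odd k. -/
/-- A `k`-plex of a latin square on `α`: a set of cells meeting each row,
column, and symbol exactly `k` times. -/
def IsPlexOn {α : Type*} [Fintype α] [DecidableEq α] (L : α × α → α)
    (P : Finset (α × α)) (k : ℕ) : Prop :=
  (∀ x : α, (P.filter fun p => p.1 = x).card = k) ∧
  (∀ y : α, (P.filter fun p => p.2 = y).card = k) ∧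
  (∀ z : α, (P.filter fun p => L p = z).card = k)

/-- `L'` has the `q`-block pattern of the Cayley table of `ℤ/2m` (i.e. is of
`q`-step type with `2m` blocks per side), witnessed by a symbol-class map `π`:
the symbols fall into classes of size `q` indexed by `ℤ/2m`, block `A_{i,j}`
uses exactly the symbols of class `i + j`, and each block is itself a latin
square on its symbol class. -/
def HasZModBlockPattern {m q : ℕ} [NeZero m]
    (L' : (ZMod (2 * m) × Fin q) × (ZMod (2 * m) × Fin q) → ZMod (2 * m) × Fin q)
    (π : ZMod (2 * m) × Fin q → ZMod (2 * m)) : Prop :=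
  (∀ z : ZMod (2 * m), (Finset.univ.filter fun s => π s = z).card = q) ∧
  (∀ i a j b, π (L' ((i, a), (j, b))) = i + j) ∧
  (∀ i j z, π z = i + j → ∀ a, ∃ b, L' ((i, a), (j, b)) = z)

lemma sum_zmod_univ (n : ℕ) [NeZero n] :
    (∑ i : ZMod n, i) = ((∑ i ∈ Finset.range n, i : ℕ) : ZMod n) := by
  rw [Nat.cast_sum]
  have hbij : Function.Bijective (fun i : Fin n => ((i : ℕ) : ZMod n)) := by
    rw [Fintype.bijective_iff_injective_and_card]
    refine ⟨fun a b hab => ?_, by simp [ZMod.card]⟩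
    have := congrArg ZMod.val hab
    simp only [ZMod.val_cast_of_lt a.2, ZMod.val_cast_of_lt b.2] at this
    exact Fin.ext this
  rw [← Fintype.sum_bijective _ hbij _ _ (fun _ => rfl), ← Fin.sum_univ_eq_sum_range]

lemma sum_zmod_two_mul (m : ℕ) [NeZero m] :
    (∑ i : ZMod (2 * m), i) = (m : ZMod (2 * m)) := by
  have h2m : (0:ℕ) < 2 * m := by have := NeZero.pos m; omega
  rw [sum_zmod_univ, Finset.sum_range_id]
  have : 2 * m * (2 * m - 1) / 2 = m * (2 * m - 1) := by
    rw [show 2 * m * (2 * m - 1) = 2 * (m * (2 * m - 1)) by ring,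
      Nat.mul_div_cancel_left _ (by norm_num)]
  rw [this]
  push_cast [Nat.cast_sub (by omega : 1 ≤ 2 * m)]
  have h0 : ((2 * m : ℕ) : ZMod (2 * m)) = 0 := by
    exact_mod_cast ZMod.natCast_self (2 * m)
  push_cast at h0
  linear_combination ((m : ZMod (2*m)) - 1) * h0

theorem no_odd_plex_of_odd_step_type {m q : ℕ} [NeZero m] (hm : 1 ≤ m) (hq : Odd q)
    (L' : (ZMod (2 * m) × Fin q) × (ZMod (2 * m) × Fin q) → ZMod (2 * m) × Fin q)
    (π : ZMod (2 * m) × Fin q → ZMod (2 * m))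
    (hL' : IsLatinSquareOn L') (hpat : HasZModBlockPattern L' π) :
    ∀ k : ℕ, Odd k → ¬ ∃ P, IsPlexOn L' P k := by
  rintro k hk ⟨P, hrow, hcol, hsym⟩
  classical
  set S : ZMod (2 * m) := ∑ i : ZMod (2 * m), i with hSdef
  -- counting by symbols
  have hA : ∑ p ∈ P, π (L' p) = (k * q) • S := by
    rw [← Finset.sum_fiberwise P (fun p => L' p) (fun p => π (L' p))]
    have h1 : ∀ z, ∑ p ∈ P.filter (fun p => L' p = z), π (L' p) = k • π z := by
      intro z
      rw [Finset.sum_congr rfl (fun p hp => by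
        rw [(Finset.mem_filter.1 hp).2]), Finset.sum_const, hsym z]
    rw [Finset.sum_congr rfl (fun z _ => h1 z), ← Finset.smul_sum]
    have h2 : ∑ z : ZMod (2 * m) × Fin q, π z = q • S := by
      rw [← Finset.sum_fiberwise Finset.univ π π]
      have h3 : ∀ w, ∑ z ∈ Finset.univ.filter (fun z => π z = w), π z = q • w := by
        intro w
        rw [Finset.sum_congr rfl (fun z hz => (Finset.mem_filter.1 hz).2),
          Finset.sum_const, hpat.1 w]
      rw [Finset.sum_congr rfl (fun w _ => h3 w), ← Finset.smul_sum]
    rw [h2, smul_smul]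
  -- counting by rows
  have hrow' : ∑ p ∈ P, p.1.1 = (k * q) • S := by
    rw [← Finset.sum_fiberwise P (fun p => p.1) (fun p => p.1.1)]
    have h1 : ∀ x : ZMod (2 * m) × Fin q,
        ∑ p ∈ P.filter (fun p => p.1 = x), p.1.1 = k • x.1 := by
      intro x
      rw [Finset.sum_congr rfl (fun p hp => by rw [(Finset.mem_filter.1 hp).2]),
        Finset.sum_const, hrow x]
    rw [Finset.sum_congr rfl (fun x _ => h1 x), ← Finset.smul_sum,
      Fintype.sum_prod_type]
    simp only [Finset.sum_const, Finset.card_univ, Fintype.card_fin]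
    rw [← Finset.smul_sum, smul_smul]
  -- counting by columns
  have hcol' : ∑ p ∈ P, p.2.1 = (k * q) • S := by
    rw [← Finset.sum_fiberwise P (fun p => p.2) (fun p => p.2.1)]
    have h1 : ∀ y : ZMod (2 * m) × Fin q,
        ∑ p ∈ P.filter (fun p => p.2 = y), p.2.1 = k • y.1 := by
      intro y
      rw [Finset.sum_congr rfl (fun p hp => by rw [(Finset.mem_filter.1 hp).2]),
        Finset.sum_const, hcol y]
    rw [Finset.sum_congr rfl (fun y _ => h1 y), ← Finset.smul_sum,
      Fintype.sum_prod_type]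
    simp only [Finset.sum_const, Finset.card_univ, Fintype.card_fin]
    rw [← Finset.smul_sum, smul_smul]
  -- the block pattern relation
  have hE : ∑ p ∈ P, π (L' p) = ∑ p ∈ P, p.1.1 + ∑ p ∈ P, p.2.1 := by
    rw [← Finset.sum_add_distrib]
    refine Finset.sum_congr rfl fun p _ => ?_
    obtain ⟨⟨i, a⟩, ⟨j, b⟩⟩ := p
    exact hpat.2.1 i a j b
  have hzero : (k * q) • S = 0 := by
    have := hE
    rw [hA, hrow', hcol'] at this
    linear_combination -this
  -- extract contradiction
  obtain ⟨t, ht⟩ := hk.mul hq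
  rw [hSdef, sum_zmod_two_mul, nsmul_eq_mul, ht] at hzero
  have h0 : ((2 * m : ℕ) : ZMod (2 * m)) = 0 := ZMod.natCast_self (2 * m)
  push_cast at hzero h0
  have hm0 : (m : ZMod (2 * m)) = 0 := by
    linear_combination hzero - (t : ZMod (2 * m)) * h0
  rw [ZMod.natCast_eq_zero_iff] at hm0
  have := Nat.le_of_dvd (by omega) hm0
  omega
end

section
/- Let G be a finite Abelian group and L its Cayley table. A near 1-weight of L missing row r, column c, and symbol s can be extended to a 1-weight of L if and only if r + c = s. Consequently, if G has a unique involution u, then every near 1-weight satisfies s − r − c = u ≠ 0 and is therefore maximal. -/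
/-- A near `1`-weight of the Cayley table of `G` missing row `r`, column `c`
and symbol `s`: all row, column, and symbol sums are `1`, except those at
`r`, `c`, `s`, which are `0`. -/
def IsNearOneWeight {G : Type*} [AddCommGroup G] [Fintype G] [DecidableEq G]
    (θ : G × G → ℤ) (r c s : G) : Prop :=
  (∀ x : G, ∑ y : G, θ (x, y) = if x = r then 0 else 1) ∧
  (∀ y : G, ∑ x : G, θ (x, y) = if y = c then 0 else 1) ∧
  (∀ z : G, ∑ x : G, θ (x, z - x) = if z = s then 0 else 1)

/-- In a group with a unique involution `u`, the sum of all elements is `u`. -/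
lemma sum_univ_unique_invol {G : Type*} [AddCommGroup G] [Fintype G] [DecidableEq G] (u : G)
    (hu0 : u ≠ 0) (hu2 : u + u = 0) (huniq : ∀ v : G, v ≠ 0 → v + v = 0 → v = u) :
    ∑ g : G, g = u := by
  classical
  have h1 : ∑ g ∈ Finset.univ.filter (fun g : G => g + g = 0), g +
      ∑ g ∈ Finset.univ.filter (fun g : G => ¬ (g + g = 0)), g = ∑ g : G, g :=
    Finset.sum_filter_add_sum_filter_not _ _ _
  have h2 : ∑ g ∈ Finset.univ.filter (fun g : G => ¬ (g + g = 0)), g = 0 := by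
    refine Finset.sum_involution (fun a _ => -a) ?_ ?_ ?_ ?_
    · intro a _; simp
    · intro a ha _ h
      exact (Finset.mem_filter.mp ha).2 (neg_eq_iff_add_eq_zero.mp h)
    · intro a ha
      simp only [Finset.mem_filter, Finset.mem_univ, true_and] at ha ⊢
      intro h; exact ha (by simpa using congrArg Neg.neg h)
    · intro a _; simp
  have h3 : Finset.univ.filter (fun g : G => g + g = 0) = {0, u} := by
    ext g
    simp only [Finset.mem_filter, Finset.mem_univ, true_and, Finset.mem_insert,
      Finset.mem_singleton]
    constructor
    · intro hg
      by_cases h0 : g = 0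
      · exact Or.inl h0
      · exact Or.inr (huniq g h0 hg)
    · rintro (rfl | rfl)
      · simp
      · exact hu2
  rw [← h1, h2, h3, Finset.sum_pair (Ne.symm hu0)]
  simp

lemma ite_smul_sum {G : Type*} [AddCommGroup G] [Fintype G] [DecidableEq G] (r : G) :
    ∑ x : G, (if x = r then (0:ℤ) else 1) • x = (∑ x : G, x) - r := by
  have h : ∀ x : G, (if x = r then (0:ℤ) else 1) • x = x - (if x = r then x else 0) := by
    intro x; split <;> simp
  simp_rw [h, Finset.sum_sub_distrib]
  rw [Finset.sum_ite_eq' Finset.univ r (fun x => x)]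
  simp

/-- The fundamental constraint on a near `1`-weight: `s - r - c = -(∑ g, g)`. -/
lemma key_identity_s12 {G : Type*} [AddCommGroup G] [Fintype G] [DecidableEq G]
    (θ : G × G → ℤ) (r c s : G) (hθ : IsNearOneWeight θ r c s) :
    s - r - c = -(∑ g : G, g) := by
  obtain ⟨hrow, hcol, hsym⟩ := hθ
  set T := ∑ g : G, g with hT
  have hA : ∑ q : G × G, θ q • (q.1 + q.2) = (T - r) + (T - c) := by
    rw [Fintype.sum_prod_type]
    have h : ∀ x y : G, θ (x, y) • (x + y) = θ (x, y) • x + θ (x, y) • y :=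
      fun x y => smul_add _ _ _
    simp_rw [h, Finset.sum_add_distrib]
    congr 1
    · rw [← ite_smul_sum r]
      refine Finset.sum_congr rfl fun x _ => ?_
      rw [← Finset.sum_smul, hrow x]
    · rw [Finset.sum_comm, ← ite_smul_sum c]
      refine Finset.sum_congr rfl fun y _ => ?_
      rw [← Finset.sum_smul, hcol y]
  have hB : ∑ q : G × G, θ q • (q.1 + q.2) = T - s := by
    have hE : ∑ q : G × G, θ q • (q.1 + q.2) = ∑ p : G × G, θ (p.1, p.2 - p.1) • p.2 := by
      refine (Fintype.sum_equiv
        (⟨fun p => (p.1, p.2 - p.1), fun p => (p.1, p.2 + p.1),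
          fun p => by simp, fun p => by simp⟩ : G × G ≃ G × G) _ _ fun p => ?_).symm
      show θ (p.1, p.2 - p.1) • p.2 = θ (p.1, p.2 - p.1) • (p.1 + (p.2 - p.1))
      congr 1
      abel
    rw [hE, Fintype.sum_prod_type, Finset.sum_comm, ← ite_smul_sum s]
    refine Finset.sum_congr rfl fun z _ => ?_
    rw [← Finset.sum_smul, hsym z]
  have h := hA.symm.trans hB
  have h2 : s - r - c - (-T) = (T - r + (T - c)) - (T - s) := by abel
  rw [h, sub_self] at h2
  exact sub_eq_zero.mp h2

/-- A near `1`-weight extends to a `1`-weight iff `r + c = s`. -/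
lemma near_ext_iff {G : Type*} [AddCommGroup G] [Fintype G] [DecidableEq G]
    (θ : G × G → ℤ) (r c s : G) (hθ : IsNearOneWeight θ r c s) :
    (∃ p : G × G, IsCayleyWeight (fun q => θ q + if q = p then 1 else 0) 1) ↔ r + c = s := by
  obtain ⟨hrow, hcol, hsym⟩ := hθ
  constructor
  · rintro ⟨⟨a, b⟩, hw, hwc, hws⟩
    have h1 := hw a
    simp only [Finset.sum_add_distrib, hrow a, Prod.mk.injEq, true_and] at h1
    rw [Finset.sum_ite_eq' Finset.univ b (fun _ => (1:ℤ))] at h1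
    simp only [Finset.mem_univ, if_true] at h1
    have har : a = r := by by_contra h; simp [h] at h1
    have h2 := hwc b
    simp only [Finset.sum_add_distrib, hcol b, Prod.mk.injEq, and_true] at h2
    rw [Finset.sum_ite_eq' Finset.univ a (fun _ => (1:ℤ))] at h2
    simp only [Finset.mem_univ, if_true] at h2
    have hbc : b = c := by by_contra h; simp [h] at h2
    have h3 := hws (a + b)
    have hcond : ∀ x : G, ((x, a + b - x) = (a, b)) ↔ x = a := by
      intro x
      constructor
      · intro h; exact (Prod.mk.injEq _ _ _ _ ▸ h).1
      · rintro rfl; simp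
    simp only [Finset.sum_add_distrib, hsym (a + b)] at h3
    rw [Finset.sum_congr rfl (fun x _ => by rw [if_congr (hcond x) rfl rfl]),
      Finset.sum_ite_eq' Finset.univ a (fun _ => (1:ℤ))] at h3
    simp only [Finset.mem_univ, if_true] at h3
    have habs : a + b = s := by by_contra h; simp [h] at h3
    rw [← har, ← hbc, habs]
  · intro h
    refine ⟨(r, c), fun x => ?_, fun y => ?_, fun z => ?_⟩
    · simp only [Finset.sum_add_distrib, hrow x, Prod.mk.injEq]
      by_cases hx : x = r <;> simp [hx, Finset.sum_ite_eq' Finset.univ c (fun _ => (1:ℤ))]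
    · simp only [Finset.sum_add_distrib, hcol y, Prod.mk.injEq]
      by_cases hy : y = c <;> simp [hy, Finset.sum_ite_eq' Finset.univ r (fun _ => (1:ℤ))]
    · simp only [Finset.sum_add_distrib, hsym z, Prod.mk.injEq]
      have hcond : ∀ x : G, (x = r ∧ z - x = c) ↔ (x = r ∧ z = s) := by
        intro x
        constructor
        · rintro ⟨rfl, h2⟩; exact ⟨rfl, by rw [← h, ← h2]; abel⟩
        · rintro ⟨rfl, rfl⟩; exact ⟨rfl, by rw [← h]; abel⟩
      rw [Finset.sum_congr rfl (fun x _ => by rw [if_congr (hcond x) rfl rfl])]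
      by_cases hz : z = s
      · subst hz
        simp [Finset.sum_ite_eq' Finset.univ r (fun _ => (1:ℤ))]
      · simp [hz]

theorem near_one_weight_extension {G : Type*} [AddCommGroup G] [Fintype G] [DecidableEq G]
    (θ : G × G → ℤ) (r c s : G) (hθ : IsNearOneWeight θ r c s) :
    ((∃ p : G × G, IsCayleyWeight (fun q => θ q + if q = p then 1 else 0) 1) ↔ r + c = s) ∧
    (∀ u : G, (u ≠ 0 ∧ u + u = 0 ∧ ∀ v : G, v ≠ 0 → v + v = 0 → v = u) →
      s - r - c = u ∧ u ≠ 0 ∧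
        ¬ ∃ p : G × G, IsCayleyWeight (fun q => θ q + if q = p then 1 else 0) 1) := by
  refine ⟨near_ext_iff θ r c s hθ, ?_⟩
  rintro u ⟨hu0, hu2, huniq⟩
  have hsum := sum_univ_unique_invol u hu0 hu2 huniq
  have hk := key_identity_s12 θ r c s hθ
  rw [hsum, neg_eq_of_add_eq_zero_left hu2] at hk
  refine ⟨hk, hu0, ?_⟩
  rintro ⟨p, hp⟩
  have h := (near_ext_iff θ r c s hθ).mp ⟨p, hp⟩
  apply hu0
  rw [← hk, ← h]
  abel
end

section
/- Let G be a finite Abelian group. The Cayley table of G admits a 1-weight if and only if G does not have a unique involution. Equivalently, the Cayley table of G has a 1-weight or every near 1-weight of it is maximal, but not both. -/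
/-!
Summing `θ (x, y) • (x + y)` over the table once by rows and columns and once by symbols shows
that a `1`-weight forces `∑ g + ∑ g = ∑ g`, i.e. `∑ g = 0`. Conversely, if `∑ g = 0`, list `G`
as `a₁, …, aₙ` and weight the cells `(aᵢ, aᵢ₊₁ + ⋯ + aₙ)`: their symbols are the partial sums
`aᵢ + ⋯ + aₙ`, which telescope, and a correction in row `0` repairs the column sums.

The sum of all elements of `G` is the sum over its `2`-torsion `T`. Pairing `g` with `g + u` for
an involution `u` shows that this sum is `(#T / 2) • u`; it is `u` when `u` is the only
involution, and `0` when there is a second one `v`, since `(#T / 2) • u = (#T / 2) • v` forces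
`#T / 2` to be even. Finally, removing a cell `(r, c)` from a `1`-weight leaves exactly a near
`1`-weight with `s = r + c`.
-/

open Finset

lemma Finset.exists_card_eq_two_mul_and_sum_eq_nsmul_of_involution {ι M : Type*}
    [DecidableEq ι] [AddCommMonoid M] (f : ι → M) (σ : ι → ι) (c : M) (s : Finset ι)
    (hσ : ∀ a ∈ s, σ a ∈ s) (hσσ : ∀ a ∈ s, σ (σ a) = a) (hσne : ∀ a ∈ s, σ a ≠ a)
    (hf : ∀ a ∈ s, f a + f (σ a) = c) :
    ∃ N : ℕ, #s = 2 * N ∧ ∑ a ∈ s, f a = N • c := by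
  induction s using Finset.strongInduction with
  | H s ih =>
  rcases s.eq_empty_or_nonempty with rfl | ⟨a, ha⟩
  · exact ⟨0, by simp⟩
  have hσa : σ a ∈ s.erase a := mem_erase.2 ⟨hσne a ha, hσ a ha⟩
  set t := (s.erase a).erase (σ a)
  have hts : t ⊂ s := (erase_ssubset hσa).trans (erase_ssubset ha)
  have hmem : ∀ b, b ∈ t ↔ b ≠ σ a ∧ b ≠ a ∧ b ∈ s := by simp [t]
  obtain ⟨N, hcard, hsum⟩ := ih t hts
    (fun b hb => by
      obtain ⟨hb₁, hb₂, hb⟩ := (hmem b).1 hb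
      refine (hmem _).2 ⟨fun h => hb₂ ?_, fun h => hb₁ ?_, hσ b hb⟩
      · rw [← hσσ b hb, h, hσσ a ha]
      · rw [← hσσ b hb, h])
    (fun b hb => hσσ b (hts.subset hb)) (fun b hb => hσne b (hts.subset hb))
    (fun b hb => hf b (hts.subset hb))
  refine ⟨N + 1, ?_, ?_⟩
  · rw [← card_erase_add_one ha, ← card_erase_add_one hσa, hcard]
    ring
  · rw [← add_sum_erase s f ha, ← add_sum_erase _ f hσa, hsum, ← add_assoc, hf a ha,
      succ_nsmul']

section TwoTorsion

variable {G : Type*} [AddCommGroup G] [Fintype G] [DecidableEq G]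

variable (G) in
def twoTorsion : Finset G := {g | g + g = 0}

@[simp]
lemma mem_twoTorsion {g : G} : g ∈ twoTorsion G ↔ g + g = 0 := by
  simp [twoTorsion]

lemma sum_univ_eq_sum_twoTorsion : ∑ g : G, g = ∑ g ∈ twoTorsion G, g := by
  rw [← sum_filter_add_sum_filter_not univ (· ∈ twoTorsion G), filter_mem_eq_inter,
    univ_inter]
  obtain ⟨N, -, hsum⟩ := exists_card_eq_two_mul_and_sum_eq_nsmul_of_involution id Neg.neg 0
    {g : G | g ∉ twoTorsion G}
    (fun a ha => by simpa [neg_add_eq_zero, eq_neg_iff_add_eq_zero] using ha)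
    (fun a _ => neg_neg a)
    (fun a ha h => (mem_filter.1 ha).2 (mem_twoTorsion.2 (neg_eq_iff_add_eq_zero.1 h)))
    (fun a _ => add_neg_cancel a)
  simp only [id] at hsum
  rw [hsum, nsmul_zero, add_zero]

lemma exists_card_twoTorsion_eq_two_mul_and_sum_eq_nsmul {u : G} (hu : u + u = 0)
    (hu₀ : u ≠ 0) : ∃ N : ℕ, #(twoTorsion G) = 2 * N ∧ ∑ g ∈ twoTorsion G, g = N • u :=
  exists_card_eq_two_mul_and_sum_eq_nsmul_of_involution id (· + u) u _
    (fun a ha => by rw [mem_twoTorsion] at ha ⊢; rw [add_add_add_comm, ha, hu, add_zero])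
    (fun a _ => by simp [add_assoc, hu]) (fun a _ => by simpa using hu₀)
    (fun a ha => by rw [mem_twoTorsion] at ha; rw [id, id, ← add_assoc, ha, zero_add])

lemma sum_twoTorsion_eq_zero_of_ne {u v : G} (hu : u + u = 0) (hu₀ : u ≠ 0) (hv : v + v = 0)
    (hv₀ : v ≠ 0) (huv : u ≠ v) : ∑ g ∈ twoTorsion G, g = 0 := by
  obtain ⟨N, hN, hsum_u⟩ := exists_card_twoTorsion_eq_two_mul_and_sum_eq_nsmul hu hu₀
  obtain ⟨M, hM, hsum_v⟩ := exists_card_twoTorsion_eq_two_mul_and_sum_eq_nsmul hv hv₀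
  rw [show M = N by omega] at hsum_v
  have two_mul_nsmul : ∀ {w : G}, w + w = 0 → ∀ k : ℕ, (2 * k) • w = 0 := fun hw k => by
    rw [two_mul, add_nsmul, ← nsmul_add, hw, nsmul_zero]
  rcases Nat.even_or_odd' N with ⟨k, rfl | rfl⟩
  · rw [hsum_u, two_mul_nsmul hu]
  · refine absurd ?_ huv
    rw [succ_nsmul, two_mul_nsmul hu, zero_add] at hsum_u
    rw [succ_nsmul, two_mul_nsmul hv, zero_add] at hsum_v
    rw [← hsum_u, hsum_v]

lemma sum_univ_eq_zero_iff_not_existsUnique_involution :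
    ∑ g : G, g = 0 ↔ ¬∃! u : G, u ≠ 0 ∧ u + u = 0 := by
  rw [sum_univ_eq_sum_twoTorsion]
  constructor
  · rintro h ⟨u, ⟨hu₀, hu⟩, huniq⟩
    have hT : twoTorsion G = {0, u} := by
      ext g
      rw [mem_twoTorsion, mem_insert, mem_singleton]
      refine ⟨fun hg => or_iff_not_imp_left.2 fun hg₀ => huniq g ⟨hg₀, hg⟩, ?_⟩
      rintro (rfl | rfl)
      exacts [add_zero 0, hu]
    rw [hT, sum_pair hu₀.symm, zero_add] at h
    exact hu₀ h
  · intro h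
    by_cases hex : ∃ u : G, u ≠ 0 ∧ u + u = 0
    · obtain ⟨u, hu₀, hu⟩ := hex
      obtain ⟨v, ⟨hv₀, hv⟩, hvu⟩ : ∃ v : G, (v ≠ 0 ∧ v + v = 0) ∧ v ≠ u := by
        by_contra! hne
        exact h ⟨u, ⟨hu₀, hu⟩, hne⟩
      exact sum_twoTorsion_eq_zero_of_ne hu hu₀ hv hv₀ hvu.symm
    · push Not at hex
      have hT : twoTorsion G = {0} := by
        ext g
        rw [mem_twoTorsion, mem_singleton]
        refine ⟨fun hg => by_contra fun hg₀ => hex g hg₀ hg, ?_⟩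
        rintro rfl
        exact add_zero 0
      rw [hT, sum_singleton]

end TwoTorsion

namespace CayleyTable

section

variable {G : Type*} [Fintype G]

def rowSums : (G × G → ℤ) →+ G → ℤ :=
  AddMonoidHom.mk' (fun θ x => ∑ y, θ (x, y)) fun _ _ => funext fun _ => sum_add_distrib

def colSums : (G × G → ℤ) →+ G → ℤ :=
  AddMonoidHom.mk' (fun θ y => ∑ x, θ (x, y)) fun _ _ => funext fun _ => sum_add_distrib

variable [DecidableEq G]

@[simp]
lemma rowSums_single (a b : G) : rowSums (Pi.single (a, b) 1) = Pi.single a 1 := by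
  ext x
  simp [rowSums, Pi.single_apply, ite_and]

@[simp]
lemma colSums_single (a b : G) : colSums (Pi.single (a, b) 1) = Pi.single b 1 := by
  ext y
  simp [colSums, Pi.single_apply, ite_and]

end

variable {G : Type*} [AddCommGroup G] [Fintype G]

def symbolSums : (G × G → ℤ) →+ G → ℤ :=
  AddMonoidHom.mk' (fun θ z => ∑ x, θ (x, z - x)) fun _ _ => funext fun _ => sum_add_distrib

lemma isCayleyWeight_iff (θ : G × G → ℤ) (k : ℤ) :
    IsCayleyWeight θ k ↔
      rowSums θ = (fun _ => k) ∧ colSums θ = (fun _ => k) ∧ symbolSums θ = (fun _ => k) := by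
  simp [IsCayleyWeight, funext_iff, rowSums, colSums, symbolSums]

lemma sum_rowSums_smul_add_sum_colSums_smul (θ : G × G → ℤ) :
    ∑ x, rowSums θ x • x + ∑ y, colSums θ y • y = ∑ z, symbolSums θ z • z := by
  have hsymbol : ∀ x, ∑ z, θ (x, z - x) • z = ∑ y, θ (x, y) • (x + y) := fun x =>
    Fintype.sum_equiv (Equiv.addLeft x).symm _ _ fun z => by simp [neg_add_eq_sub]
  simp only [rowSums, colSums, symbolSums, AddMonoidHom.mk'_apply, sum_smul]
  rw [sum_comm (f := fun y x => θ (x, y) • y), sum_comm (f := fun z x => θ (x, z - x) • z),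
    ← sum_add_distrib]
  simp only [hsymbol, smul_add, sum_add_distrib]

lemma sum_univ_eq_zero_of_isCayleyWeight {θ : G × G → ℤ} (hθ : IsCayleyWeight θ 1) :
    ∑ g : G, g = 0 := by
  obtain ⟨hrow, hcol, hsymbol⟩ := (isCayleyWeight_iff θ 1).1 hθ
  simpa [hrow, hcol, hsymbol] using sum_rowSums_smul_add_sum_colSums_smul θ

variable [DecidableEq G]

lemma isNearOneWeight_iff (θ : G × G → ℤ) (r c s : G) :
    IsNearOneWeight θ r c s ↔ rowSums θ = 1 - Pi.single r 1 ∧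
      colSums θ = 1 - Pi.single c 1 ∧ symbolSums θ = 1 - Pi.single s 1 := by
  simp [IsNearOneWeight, funext_iff, rowSums, colSums, symbolSums, Pi.single_apply, sub_ite]

@[simp]
lemma symbolSums_single (a b : G) : symbolSums (Pi.single (a, b) 1) = Pi.single (a + b) 1 := by
  ext z
  simp [symbolSums, Pi.single_apply, ite_and, sub_eq_iff_eq_add']

lemma isNearOneWeight_add_iff_isCayleyWeight_add_single (θ : G × G → ℤ) (r c : G) :
    IsNearOneWeight θ r c (r + c) ↔ IsCayleyWeight (θ + Pi.single (r, c) 1) 1 := by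
  simp only [isNearOneWeight_iff, isCayleyWeight_iff, map_add, rowSums_single, colSums_single,
    symbolSums_single, eq_sub_iff_add_eq, Pi.one_def]

lemma exists_rowSums_colSums_symbolSums_eq_of_list (l : List G) : ∃ θ : G × G → ℤ,
    rowSums θ = (l.map (Pi.single · 1)).sum ∧ colSums θ = (l.map (Pi.single · 1)).sum ∧
      symbolSums θ = (l.map (Pi.single · 1)).sum + Pi.single l.sum 1 - Pi.single 0 1 := by
  induction l with
  | nil => exact ⟨0, by simp⟩
  | cons a l ih =>
    obtain ⟨θ, hrow, hcol, hsymbol⟩ := ih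
    refine ⟨θ + Pi.single (a, l.sum) 1 + Pi.single (0, a) 1 - Pi.single (0, l.sum) 1,
      ?_, ?_, ?_⟩ <;>
    simp only [map_add, map_sub, hrow, hcol, hsymbol, rowSums_single, colSums_single,
      symbolSums_single, List.map_cons, List.sum_cons, zero_add] <;>
    abel

lemma exists_isCayleyWeight_of_sum_univ_eq_zero (h : ∑ g : G, g = 0) :
    ∃ θ : G × G → ℤ, IsCayleyWeight θ 1 := by
  obtain ⟨θ, hrow, hcol, hsymbol⟩ :=
    exists_rowSums_colSums_symbolSums_eq_of_list (univ : Finset G).toList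
  rw [sum_map_toList, univ_sum_single, sum_toList, h, add_sub_cancel_right] at *
  exact ⟨θ, (isCayleyWeight_iff θ 1).2 ⟨hrow, hcol, hsymbol⟩⟩

lemma forall_isNearOneWeight_add_ne_iff_not_exists_isCayleyWeight :
    (∀ (θ : G × G → ℤ) (r c s : G), IsNearOneWeight θ r c s → r + c ≠ s) ↔
      ¬∃ θ : G × G → ℤ, IsCayleyWeight θ 1 := by
  constructor
  · rintro h ⟨θ, hθ⟩
    refine h (θ - Pi.single (0, 0) 1) 0 0 (0 + 0) ?_ rfl
    rwa [isNearOneWeight_add_iff_isCayleyWeight_add_single, sub_add_cancel]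
  · rintro h θ r c s hθ rfl
    exact h ⟨_, (isNearOneWeight_add_iff_isCayleyWeight_add_single θ r c).1 hθ⟩

end CayleyTable

open CayleyTable

theorem one_weight_iff_no_unique_involution {G : Type*} [AddCommGroup G] [Fintype G]
    [DecidableEq G] :
    ((∃ θ : G × G → ℤ, IsCayleyWeight θ 1) ↔ ¬ ∃! u : G, u ≠ 0 ∧ u + u = 0) ∧
    Xor' (∃ θ : G × G → ℤ, IsCayleyWeight θ 1)
      (∀ (θ : G × G → ℤ) (r c s : G), IsNearOneWeight θ r c s → r + c ≠ s) := by
  have hweight : (∃ θ : G × G → ℤ, IsCayleyWeight θ 1) ↔ ∑ g : G, g = 0 :=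
    ⟨fun ⟨_, hθ⟩ => sum_univ_eq_zero_of_isCayleyWeight hθ,
      exists_isCayleyWeight_of_sum_univ_eq_zero⟩
  refine ⟨hweight.trans sum_univ_eq_zero_iff_not_existsUnique_involution, ?_⟩
  exact xor_iff_not_iff'.2 forall_isNearOneWeight_add_ne_iff_not_exists_isCayleyWeight.symm
end

section
/- Let G be a finite Abelian group of order n and L its Cayley table. Suppose θ : G × G → ℤ has all row sums and all column sums equal to 1, and the symbol sums are 0 for all symbols except two distinct symbols g and h, whose sums are i and n − i respectively. Then gcd(n, i) > 1. In particular, if n is prime then n−2 symbol sums cannot all be 0 while the rest are nonzero in this way. -/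
theorem two_symbol_gcd
    {G : Type*} [AddCommGroup G] [Fintype G] [DecidableEq G]
    (n : ℕ) (hn : n = Fintype.card G) (g h : G) (hgh : g ≠ h)
    (i : ℕ) (hi0 : 0 < i) (hin : i < n)
    (θ : G × G → ℤ)
    (hrow : ∀ x : G, ∑ y : G, θ (x, y) = 1)
    (hcol : ∀ y : G, ∑ x : G, θ (x, y) = 1)
    (hsym : ∀ z : G, ∑ x : G, θ (x, z - x) =
      if z = g then (i : ℤ) else if z = h then (n : ℤ) - (i : ℤ) else 0)
    : 1 < Nat.gcd n i ∧ ¬ Nat.Prime n := by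
  set S : G := ∑ x : G, ∑ y : G, θ (x, y) • (x + y) with hS
  -- row/column evaluation: S = 2 * (sum of all elements) = 0
  have hzero : S = 0 := by
    have h1 : S = (∑ x : G, x) + (∑ y : G, y) := by
      rw [hS]
      have e : ∀ x : G, ∑ y : G, θ (x, y) • (x + y)
          = (∑ y : G, θ (x, y)) • x + ∑ y : G, θ (x, y) • y := by
        intro x
        rw [Finset.sum_smul, ← Finset.sum_add_distrib]
        exact Finset.sum_congr rfl fun y _ => (smul_add _ _ _)
      simp_rw [e, hrow, one_smul, Finset.sum_add_distrib]
      congr 1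
      rw [Finset.sum_comm]
      have e2 : ∀ y : G, ∑ x : G, θ (x, y) • y = (∑ x : G, θ (x, y)) • y := by
        intro y; rw [Finset.sum_smul]
      simp_rw [e2, hcol, one_smul]
    have hneg : (∑ x : G, x) = - (∑ x : G, x) := by
      rw [← Finset.sum_neg_distrib]
      exact Fintype.sum_equiv (Equiv.neg G) _ _ (fun x => by simp)
    rw [h1]
    nth_rewrite 2 [hneg]
    exact add_neg_cancel _
  -- symbol evaluation: S = i • (g - h)
  have hsymS : S = (i : ℤ) • g + ((n : ℤ) - (i : ℤ)) • h := by
    have hre : S = ∑ z : G, ∑ x : G, θ (x, z - x) • z := by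
      rw [hS]
      rw [← Finset.sum_product', ← Finset.sum_product']
      apply Finset.sum_nbij' (fun p => (p.1 + p.2, p.1)) (fun p => (p.2, p.1 - p.2))
      · intros; simp
      · intros; simp
      · intro p _; simp
      · intro p _; simp
      · intro p _; simp
    rw [hre]
    have e3 : ∀ z : G, ∑ x : G, θ (x, z - x) • z = (∑ x : G, θ (x, z - x)) • z := by
      intro z; rw [Finset.sum_smul]
    simp_rw [e3, hsym]
    have e4 : ∀ z : G,
        (if z = g then (i : ℤ) else if z = h then (n : ℤ) - (i : ℤ) else 0) • z
        = (if z = g then (i : ℤ) • g else 0) + (if z = h then ((n : ℤ) - i) • h else 0) := by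
      intro z
      by_cases hzg : z = g
      · subst hzg
        simp [hgh]
      · by_cases hzh : z = h
        · subst hzh; simp [hzg]
        · simp [hzg, hzh]
    simp_rw [e4, Finset.sum_add_distrib, Finset.sum_ite_eq', Finset.mem_univ, if_true]
  -- conclude i • (g - h) = 0
  have hkey : (i : ℤ) • (g - h) = 0 := by
    have hnh : (n : ℤ) • h = 0 := by
      rw [hn]
      rw [natCast_zsmul]
      exact card_nsmul_eq_zero
    have := hzero ▸ hsymS
    rw [smul_sub]
    have expand : (i : ℤ) • g + ((n : ℤ) - (i : ℤ)) • h
        = ((i : ℤ) • g - (i : ℤ) • h) + (n : ℤ) • h := by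
      rw [sub_smul]; abel
    rw [expand, hnh, add_zero] at this
    exact this.symm
  -- the order of g - h divides both n and i
  have hne : g - h ≠ 0 := sub_ne_zero.mpr hgh
  have hdvd_n : addOrderOf (g - h) ∣ n := hn ▸ addOrderOf_dvd_card
  have hdvd_i : addOrderOf (g - h) ∣ i := by
    rw [addOrderOf_dvd_iff_nsmul_eq_zero, ← natCast_zsmul]
    exact hkey
  have hgcd : 1 < Nat.gcd n i := by
    rcases Nat.lt_or_ge 1 (Nat.gcd n i) with hlt | hle
    · exact hlt
    · exfalso
      have hgcdne : Nat.gcd n i ≠ 0 := by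
        intro hc
        have := Nat.eq_zero_of_gcd_eq_zero_right hc
        omega
      have hg1 : Nat.gcd n i = 1 := by omega
      have : addOrderOf (g - h) ∣ 1 := hg1 ▸ Nat.dvd_gcd hdvd_n hdvd_i
      have h1 : addOrderOf (g - h) = 1 := Nat.dvd_one.mp this
      exact hne (AddMonoid.addOrderOf_eq_one_iff.mp h1)
  refine ⟨hgcd, fun hp => ?_⟩
  have hdn : Nat.gcd n i ∣ n := Nat.gcd_dvd_left _ _
  have hdi : Nat.gcd n i ∣ i := Nat.gcd_dvd_right _ _
  have hle : Nat.gcd n i ≤ i := Nat.le_of_dvd hi0 hdi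
  rcases (Nat.Prime.eq_one_or_self_of_dvd hp _ hdn) with h1 | h2
  · omega
  · omega
end

section
/- Let G be a finite Abelian group of order n and fix distinct elements g, h ∈ G and integer i with 0 < i < n. If θ : G × G → ℤ has row and column sums all equal to 1, symbol sum i at g, symbol sum n − i at h, and symbol sum 0 elsewhere, then i·(g − h) = 0 in G, so the order of g − h divides i (and also divides n). -/
theorem two_symbol_order_divides
    {G : Type*} [AddCommGroup G] [Fintype G] [DecidableEq G]
    (n : ℕ) (hn : n = Fintype.card G) (g h : G) (hgh : g ≠ h)
    (i : ℕ) (hi0 : 0 < i) (hin : i < n)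
    (θ : G × G → ℤ)
    (hrow : ∀ x : G, ∑ y : G, θ (x, y) = 1)
    (hcol : ∀ y : G, ∑ x : G, θ (x, y) = 1)
    (hsym : ∀ z : G, ∑ x : G, θ (x, z - x) =
      if z = g then (i : ℤ) else if z = h then (n : ℤ) - (i : ℤ) else 0)
    : i • (g - h) = 0 ∧ addOrderOf (g - h) ∣ i ∧ addOrderOf (g - h) ∣ n := by
  -- Left side: weighted sum of symbols equals i•g + (n-i)•h
  have h1 : ∑ z : G, (∑ x : G, θ (x, z - x)) • z
      = (i : ℤ) • g + ((n : ℤ) - (i : ℤ)) • h := by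
    have hpt : ∀ z : G, (∑ x : G, θ (x, z - x)) • z
        = (if z = g then (i : ℤ) • g else 0)
          + (if z = h then ((n : ℤ) - (i : ℤ)) • h else 0) := by
      intro z
      rw [hsym z]
      by_cases hz : z = g
      · subst hz; simp [hgh]
      · by_cases hz2 : z = h
        · subst hz2; simp [hz]
        · simp [hz, hz2]
    rw [Finset.sum_congr rfl fun z _ => hpt z, Finset.sum_add_distrib,
      Finset.sum_ite_eq' Finset.univ g, Finset.sum_ite_eq' Finset.univ h]
    simp
  -- Right side: same sum equals 2 * (sum of all elements) = 0
  have h2 : ∑ z : G, (∑ x : G, θ (x, z - x)) • z = 0 := by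
    have e1 : ∑ z : G, (∑ x : G, θ (x, z - x)) • z
        = ∑ x : G, ∑ z : G, θ (x, z - x) • z := by
      rw [Finset.sum_comm]
      exact Finset.sum_congr rfl fun z _ => Finset.sum_smul
    have e2 : ∀ x : G, ∑ z : G, θ (x, z - x) • z = ∑ y : G, θ (x, y) • (x + y) := by
      intro x
      exact (Fintype.sum_equiv (Equiv.addLeft x) (fun y => θ (x, y) • (x + y))
        (fun z => θ (x, z - x) • z) (fun y => by simp)).symm
    have e3 : ∑ x : G, ∑ y : G, θ (x, y) • (x + y)
        = (∑ x : G, x) + (∑ y : G, y) := by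
      have : ∀ x : G, ∑ y : G, θ (x, y) • (x + y)
          = (∑ y : G, θ (x, y)) • x + ∑ y : G, θ (x, y) • y := by
        intro x
        rw [Finset.sum_smul]
        rw [← Finset.sum_add_distrib]
        exact Finset.sum_congr rfl fun y _ => by rw [smul_add]
      rw [Finset.sum_congr rfl fun x _ => this x, Finset.sum_add_distrib]
      congr 1
      · exact Finset.sum_congr rfl fun x _ => by rw [hrow x, one_smul]
      · rw [Finset.sum_comm]
        refine Finset.sum_congr rfl fun y _ => ?_
        rw [← Finset.sum_smul, hcol y, one_smul]
    have hS : (∑ x : G, x) + (∑ x : G, x) = 0 := by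
      have hneg : (∑ x : G, x) = ∑ x : G, -x :=
        Fintype.sum_equiv (Equiv.neg G) (fun x => x) (fun x => -x) (fun x => by simp)
      rw [Finset.sum_neg_distrib] at hneg
      exact add_eq_zero_iff_eq_neg.mpr hneg
    rw [e1, Finset.sum_congr rfl fun x _ => e2 x, e3, hS]
  have key : (i : ℤ) • g + ((n : ℤ) - (i : ℤ)) • h = 0 := h1 ▸ h2
  have hnh : (n : ℤ) • h = 0 := by
    rw [natCast_zsmul, hn]
    exact card_nsmul_eq_zero
  have hz : (i : ℤ) • (g - h) = 0 := by
    rw [smul_sub]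
    rw [sub_smul, hnh, zero_sub] at key
    exact sub_eq_zero_of_eq (add_neg_eq_zero.mp key)
  have hz' : i • (g - h) = 0 := by
    rw [natCast_zsmul] at hz
    exact hz
  refine ⟨hz', addOrderOf_dvd_of_nsmul_eq_zero hz', ?_⟩
  rw [hn]
  exact addOrderOf_dvd_card
end

section
/- Let G = ℤ/p for p prime and L its Cayley table. There is no way to select a single cell from each row and each column of L (i.e., a permutation σ of G selecting cells (x, σ(x))) such that the set of symbols {x + σ(x) : x ∈ G} has exactly two distinct elements. -/
/-!
The symbols of a selection add up to `∑ x + ∑ σ x = ∑ x + ∑ (-x) = 0`. If they take only the values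
`a ≠ b`, with `a` taken `m` times, this sum is `m • (a - b) + p • b = m • (a - b)`, so `p ∣ m`.
But both values occur, so `0 < m < p`.
-/

open Finset

theorem sum_add_perm_eq_zero {G : Type*} [AddCommGroup G] [Fintype G] (σ : Equiv.Perm G) :
    ∑ x, (x + σ x) = 0 := by
  calc ∑ x, (x + σ x) = ∑ x, x + ∑ x, -x := by
        rw [sum_add_distrib, Equiv.sum_comp σ (fun x => x)]
        exact congrArg _ (Equiv.sum_comp (Equiv.neg G) fun x => x).symm
    _ = 0 := by rw [← sum_add_distrib]; simp

theorem sum_sub_eq_card_filter_nsmul {α M : Type*} [Fintype α] [AddCommGroup M] [DecidableEq M]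
    {f : α → M} {a b : M} (hf : ∀ x, f x = a ∨ f x = b) :
    ∑ x, (f x - b) = #{x | f x = a} • (a - b) := by
  rw [← sum_const, sum_filter]
  refine sum_congr rfl fun x _ => ?_
  split_ifs with hx
  · rw [hx]
  · rw [(hf x).resolve_left hx, sub_self]

theorem no_two_symbol_selection_of_prime (p : ℕ) [hp : Fact p.Prime] :
    ¬ ∃ σ : Equiv.Perm (ZMod p),
      (Finset.univ.image fun x : ZMod p => x + σ x).card = 2 := by
  rintro ⟨σ, hcard⟩
  obtain ⟨a, b, hab, himg⟩ := card_eq_two.mp hcard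
  have hval (c) : c ∈ ({a, b} : Finset (ZMod p)) ↔ ∃ x, x + σ x = c := by simp [← himg]
  have htwo (x : ZMod p) : x + σ x = a ∨ x + σ x = b := by simpa using (hval _).2 ⟨x, rfl⟩
  obtain ⟨xa, hxa⟩ := (hval a).1 (mem_insert_self a {b})
  obtain ⟨xb, hxb⟩ := (hval b).1 (mem_insert_of_mem (mem_singleton_self b))
  set m := #{x : ZMod p | x + σ x = a}
  have hm_pos : 0 < m := card_pos.2 ⟨xa, by simpa using hxa⟩
  have hm_lt : m < p := by
    rw [← ZMod.card p, ← card_univ]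
    exact card_lt_card (filter_ssubset.2 ⟨xb, mem_univ _, by rw [hxb]; exact hab.symm⟩)
  have hm_smul : m • (a - b) = 0 := by
    rw [← sum_sub_eq_card_filter_nsmul htwo, sum_sub_distrib, sum_add_perm_eq_zero, sum_const,
      card_univ, ZMod.card, nsmul_eq_mul, ZMod.natCast_self, zero_mul, sub_zero]
  have hm_dvd : p ∣ m := by
    rw [← ZMod.natCast_eq_zero_iff]
    rw [nsmul_eq_mul] at hm_smul
    exact (mul_eq_zero.1 hm_smul).resolve_right (sub_ne_zero.2 hab)
  exact hm_pos.ne' (Nat.eq_zero_of_dvd_of_lt hm_dvd hm_lt)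
end
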